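/- arXiv:2408.15111 — 6 statements merged into one kernel-verified Lean document; each statement's English description precedes it below -/
import Mathlib

section
/- For all n, k ≥ 0 with n ≥ 2k+1, we have (k+1) · b_{n,k}(231) = 2^{n−2k−1} · C(n−1, 2k) · C(2k, k), where b_{n,k}(231) is the number of permutations in S_n(231) with exactly k big descents. -/
open scoped Classical

/-- A permutation `π` of `Fin n` contains the pattern `σ` (a permutation of `Fin m`)
if some subsequence of the one-line notation of `π` standardizes to `σ`. -/
def Contains {n m : ℕ} (π : Equiv.Perm (Fin n)) (σ : Equiv.Perm (Fin m)) : Prop :=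
  ∃ f : Fin m → Fin n, StrictMono f ∧ ∀ a b : Fin m, σ a < σ b ↔ π (f a) < π (f b)

/-- `π` avoids the pattern `σ`. -/
def Avoids {n m : ℕ} (π : Equiv.Perm (Fin n)) (σ : Equiv.Perm (Fin m)) : Prop :=
  ¬ Contains π σ

/-- The pattern 123 (identity, in 0-indexed one-line notation `[0,1,2]`). -/
def perm123 : Equiv.Perm (Fin 3) := 1

/-- The pattern 132 (0-indexed one-line notation `[0,2,1]`). -/
def perm132 : Equiv.Perm (Fin 3) := ⟨![0, 2, 1], ![0, 2, 1], by decide, by decide⟩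

/-- The pattern 213 (0-indexed one-line notation `[1,0,2]`). -/
def perm213 : Equiv.Perm (Fin 3) := ⟨![1, 0, 2], ![1, 0, 2], by decide, by decide⟩

/-- The pattern 231 (0-indexed one-line notation `[1,2,0]`). -/
def perm231 : Equiv.Perm (Fin 3) := ⟨![1, 2, 0], ![2, 0, 1], by decide, by decide⟩

/-- The pattern 312 (0-indexed one-line notation `[2,0,1]`). -/
def perm312 : Equiv.Perm (Fin 3) := ⟨![2, 0, 1], ![1, 2, 0], by decide, by decide⟩

/-- The pattern 321 (0-indexed one-line notation `[2,1,0]`). -/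
def perm321 : Equiv.Perm (Fin 3) := ⟨![2, 1, 0], ![2, 1, 0], by decide, by decide⟩

/-- The number of big descents of `π`: 0-indexed positions `k` with `π k > π (k+1) + 1`. -/
def bdes {n : ℕ} (π : Equiv.Perm (Fin n)) : ℕ :=
  ((Finset.range n).filter fun k =>
    ∃ hk : k + 1 < n, (π ⟨k + 1, hk⟩ : ℕ) + 1 < (π ⟨k, Nat.lt_of_succ_lt hk⟩ : ℕ)).card

/-!
Cut a 231-avoiding permutation of `{0, …, m}` at its maximum: `π = α m β`. Avoidance of 231
forces every letter of `α` below every letter of `β`, so `α` is a 231-avoiding permutation of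
`{0, …, a-1}` and `β` a shifted one of `{a, …, m-1}`; the big descents of `π` are those of `α`
and those of `m β`. With `P n = ∑ X ^ bdes π` and `Q n = ∑ X ^ bdes (n π)` over 231-avoiders of
length `n` (`bdesPoly` and `bdesPolyTop`), this reads `P (m+1) = ∑ₐ P a * Q (m-a)`, and splitting on whether `π` starts with
its maximum gives `Q (b+1) = (1 - X) Q b + X P (b+1)`. Eliminating `Q` leaves
`P (m+2) = 2 P (m+1) + X ∑_{a<m} P (a+1) P (m-a)`, which together with `P 0 = P 1 = 1`
determines `P`. The polynomials with coefficients `2^(n-2k-1) C(n-1, 2k) Cat k` obey the same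
recurrence by Pascal's rule, an upper Vandermonde identity and the Catalan recurrence; finally
`(k+1) Cat k = C(2k, k)`.
-/

open scoped Finset

namespace List

def Avoids231 (l : List ℕ) : Prop :=
  ∀ a b c, [a, b, c] <+ l → ¬ (c < a ∧ a < b)

def bdes : List ℕ → ℕ
  | x :: y :: t => (if y + 1 < x then 1 else 0) + bdes (y :: t)
  | _ => 0

@[simp] lemma bdes_nil : bdes [] = 0 := rfl

@[simp] lemma bdes_singleton (x : ℕ) : bdes [x] = 0 := rfl

lemma bdes_cons_cons (x y : ℕ) (t : List ℕ) :
    bdes (x :: y :: t) = (if y + 1 < x then 1 else 0) + bdes (y :: t) := rfl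

lemma bdes_append_cons {s : List ℕ} {y : ℕ} (t : List ℕ) (hs : ∀ x ∈ s, x ≤ y + 1) :
    bdes (s ++ y :: t) = bdes s + bdes (y :: t) := by
  induction s with
  | nil => simp
  | cons x s ih =>
    cases s with
    | nil =>
      have hx : ¬ y + 1 < x := Nat.not_lt.2 (hs x mem_cons_self)
      simp [bdes_cons_cons, hx]
    | cons x' s =>
      simp only [cons_append, bdes_cons_cons] at ih ⊢
      rw [ih (fun z hz => hs z (mem_cons_of_mem x hz)), Nat.add_assoc]

lemma bdes_map_add (a : ℕ) : ∀ l : List ℕ, bdes (l.map (a + ·)) = bdes l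
  | [] | [_] => rfl
  | x :: y :: t => by
    have ih := bdes_map_add a (y :: t)
    simp only [map_cons, bdes_cons_cons] at ih ⊢
    rw [ih]
    congr 1
    exact if_congr (by omega) rfl rfl

theorem bdes_eq_card : ∀ l : List ℕ,
    l.bdes = #{k ∈ Finset.range l.length | ∃ h : k + 1 < l.length, l[k + 1] + 1 < l[k]}
  | [] => rfl
  | [x] => by simp
  | x :: y :: t => by
    rw [bdes_cons_cons, bdes_eq_card (y :: t), Finset.card_filter, Finset.card_filter]
    simp only [length_cons]
    rw [Finset.sum_range_succ' _ (t.length + 1), add_comm]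
    simp

@[simp] lemma avoids231_nil : Avoids231 [] := by
  simp [Avoids231]

lemma Avoids231.sublist {l l' : List ℕ} (h : Avoids231 l') (hl : l <+ l') : Avoids231 l :=
  fun a b c habc => h a b c (habc.trans hl)

lemma avoids231_map_iff {f : ℕ → ℕ} (hf : StrictMono f) {l : List ℕ} :
    Avoids231 (l.map f) ↔ Avoids231 l := by
  constructor
  · intro h a b c habc ⟨hca, hab⟩
    exact h _ _ _ (habc.map f) ⟨hf hca, hf hab⟩
  · intro h a b c habc ⟨hca, hab⟩
    obtain ⟨l', hl', hmap⟩ := sublist_map_iff.1 habc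
    match l', hmap with
    | [a', b', c'], hmap =>
      simp only [map_cons, map_nil, cons.injEq, and_true] at hmap
      obtain ⟨rfl, rfl, rfl⟩ := hmap
      exact h a' b' c' hl' ⟨hf.lt_iff_lt.1 hca, hf.lt_iff_lt.1 hab⟩

lemma avoids231_append_cons_iff {s t : List ℕ} {M : ℕ} (hs : ∀ x ∈ s, x < M)
    (ht : ∀ y ∈ t, y < M) :
    Avoids231 (s ++ M :: t) ↔ Avoids231 s ∧ Avoids231 t ∧ ∀ x ∈ s, ∀ y ∈ t, x ≤ y := by
  constructor
  · intro h
    refine ⟨h.sublist (sublist_append_left _ _),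
      h.sublist ((sublist_cons_self _ _).trans (sublist_append_right _ _)),
      fun x hx y hy => Nat.le_of_not_lt fun hyx => h x M y ?_ ⟨hyx, hs x hx⟩⟩
    exact (singleton_sublist.2 hx).append ((singleton_sublist.2 hy).cons_cons M)
  · rintro ⟨hs', ht', hst⟩ a b c habc ⟨hca, hab⟩
    obtain ⟨r₁, r₂, hr, h₁, h₂⟩ := sublist_append_iff.1 habc
    -- `r₁` holds the letters of the occurrence that lie in `s`
    match r₁, r₂, hr with
    | [], _, rfl =>
      rcases sublist_cons_iff.1 h₂ with h₂ | ⟨r, hr, h₂⟩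
      · exact ht' a b c h₂ ⟨hca, hab⟩
      · simp only [cons.injEq] at hr
        obtain ⟨rfl, rfl⟩ := hr
        exact absurd (ht b (h₂.subset (by simp))) (by omega)
    | [_], _, rfl =>
      have hc : c ∈ t := by
        rcases sublist_cons_iff.1 h₂ with h₂ | ⟨r, hr, h₂⟩
        · exact h₂.subset (by simp)
        · simp only [cons.injEq] at hr
          exact h₂.subset (by simp [← hr.2])
      have := hst a (h₁.subset (by simp)) c hc
      omega
    | [_, _], _, rfl =>
      rcases sublist_cons_iff.1 h₂ with h₂ | ⟨r, hr, -⟩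
      · have := hst a (h₁.subset (by simp)) c (h₂.subset (by simp))
        omega
      · simp only [cons.injEq] at hr
        have := hs b (h₁.subset (by simp))
        omega
    | [_, _, _], [], rfl => exact hs' a b c h₁ ⟨hca, hab⟩

theorem not_avoids231_iff {l : List ℕ} : ¬ l.Avoids231 ↔
    ∃ i j k : Fin l.length, i < j ∧ j < k ∧ l[k] < l[i] ∧ l[i] < l[j] := by
  simp only [Avoids231, not_forall, not_not, exists_prop]
  constructor
  · rintro ⟨a, b, c, h, hca, hab⟩
    obtain ⟨is, his, hlt⟩ := sublist_eq_map_getElem h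
    match is, his, hlt with
    | [i, j, k], his, hlt =>
      simp only [map_cons, map_nil, cons.injEq, and_true] at his
      simp only [pairwise_cons, mem_cons, forall_eq_or_imp, mem_nil_iff] at hlt
      obtain ⟨rfl, rfl, rfl⟩ := his
      exact ⟨i, j, k, hlt.1.1, hlt.2.1.1, hca, hab⟩
  · rintro ⟨i, j, k, hij, hjk, hki, hij'⟩
    refine ⟨l[i], l[j], l[k], ?_, hki, hij'⟩
    simpa using map_getElem_sublist (l := l) (is := [i, j, k])
      (by simp [hij, hjk, hij.trans hjk])

theorem not_avoids231_ofFn_iff {n : ℕ} (g : Fin n → ℕ) : ¬ (ofFn g).Avoids231 ↔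
    ∃ i j k : Fin n, i < j ∧ j < k ∧ g k < g i ∧ g i < g j := by
  rw [not_avoids231_iff]
  constructor
  · rintro ⟨i, j, k, hij, hjk, h₁, h₂⟩
    exact ⟨i.cast (by simp), j.cast (by simp), k.cast (by simp), hij, hjk,
      by simpa [Fin.cast] using h₁, by simpa [Fin.cast] using h₂⟩
  · rintro ⟨i, j, k, hij, hjk, h₁, h₂⟩
    exact ⟨i.cast (by simp), j.cast (by simp), k.cast (by simp), hij, hjk, by simpa using h₁,
      by simpa using h₂⟩

theorem perm_range_of_append_perm_range {s t : List ℕ} {m : ℕ} (h : s ++ t ~ range m)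
    (hst : ∀ x ∈ s, ∀ y ∈ t, x ≤ y) :
    s ~ range s.length ∧ ∃ β, β ~ range t.length ∧ t = β.map (s.length + ·) := by
  have hnd : (s ++ t).Nodup := h.nodup_iff.2 nodup_range
  have hmem (x : ℕ) : x ∈ s ++ t ↔ x < m := by rw [h.mem_iff, mem_range]
  have hdisj : ∀ x ∈ s, x ∉ t := fun x hx hx' => (nodup_append.1 hnd).2.2 x hx x hx' rfl
  have hlen : s.length + t.length = m := by simpa using h.length_eq
  have hs : ∀ x ∈ s, x < s.length := by
    intro x hx
    have hsub : Finset.range (x + 1) ⊆ s.toFinset := by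
      intro y hy
      rw [Finset.mem_range] at hy
      have hym : y < m := lt_of_le_of_lt (by omega) ((hmem x).1 (mem_append_left _ hx))
      rcases mem_append.1 ((hmem y).2 hym) with hy' | hy'
      · exact mem_toFinset.2 hy'
      · obtain rfl : y = x := by have := hst x hx y hy'; omega
        exact absurd hy' (hdisj y hx)
    simpa using (Finset.card_le_card hsub).trans (toFinset_card_le s)
  have ht : ∀ y ∈ t, s.length ≤ y := by
    intro y hy
    have hsub : Finset.Ico y m ⊆ t.toFinset := by
      intro z hz
      rw [Finset.mem_Ico] at hz
      rcases mem_append.1 ((hmem z).2 hz.2) with hz' | hz'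
      · obtain rfl : z = y := by have := hst z hz' y hy; omega
        exact absurd hy (hdisj z hz')
      · exact mem_toFinset.2 hz'
    have hcard : m - y ≤ t.length := by
      simpa using (Finset.card_le_card hsub).trans (toFinset_card_le t)
    omega
  refine ⟨((nodup_append.1 hnd).1.subperm fun x hx => mem_range.2 (hs x hx)).perm_of_length_le
    (by simp), t.map (· - s.length), ?_, ?_⟩
  · refine (Nodup.subperm ?_ fun z hz => ?_).perm_of_length_le (by simp)
    · refine (nodup_append.1 hnd).2.1.map_on fun x hx y hy hxy => ?_
      have := ht x hx
      have := ht y hy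
      omega
    · obtain ⟨y, hy, rfl⟩ := mem_map.1 hz
      have := (hmem y).1 (mem_append_right _ hy)
      have := ht y hy
      rw [mem_range]
      omega
  · rw [map_map]
    conv_lhs => rw [← map_id t]
    exact map_congr_left fun y hy => by have := ht y hy; simp only [id, Function.comp]; omega

end List

open Finset Polynomial

section Recurrence

variable {R : Type*}

theorem eq_of_recurrence [Semiring R] {x : R} {r s : ℕ → R}
    (hr : ∀ m, r (m + 2) = 2 * r (m + 1) + x * ∑ a ∈ range m, r (a + 1) * r (m - a))
    (hs : ∀ m, s (m + 2) = 2 * s (m + 1) + x * ∑ a ∈ range m, s (a + 1) * s (m - a))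
    (h0 : r 0 = s 0) (h1 : r 1 = s 1) : r = s := by
  funext n
  induction n using Nat.strong_induction_on with
  | _ n ih =>
    match n with
    | 0 => exact h0
    | 1 => exact h1
    | m + 2 =>
      rw [hr, hs, ih (m + 1) (by omega)]
      congr 2
      exact sum_congr rfl fun a ha => by
        have := mem_range.1 ha
        rw [ih (a + 1) (by omega), ih (m - a) (by omega)]

theorem recurrence_of_convolution [CommRing R] {x : R} {p q : ℕ → R} (hp0 : p 0 = 1)
    (hq0 : q 0 = 1) (hp : ∀ m, p (m + 1) = ∑ a ∈ range (m + 1), p a * q (m - a))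
    (hq : ∀ b, q (b + 1) = (1 - x) * q b + x * p (b + 1)) (m : ℕ) :
    p (m + 2) = 2 * p (m + 1) + x * ∑ a ∈ range m, p (a + 1) * p (m - a) := by
  have hshift : ∑ a ∈ range (m + 1), p a * q (m + 1 - a) =
      (1 - x) * p (m + 1) + x * ∑ a ∈ range (m + 1), p a * p (m - a + 1) := by
    rw [hp m, mul_sum, mul_sum, ← sum_add_distrib]
    refine sum_congr rfl fun a ha => ?_
    rw [show m + 1 - a = m - a + 1 by have := mem_range.1 ha; omega, hq]
    ring
  have hfirst : ∑ a ∈ range (m + 1), p a * p (m - a + 1) =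
      p (m + 1) + ∑ a ∈ range m, p (a + 1) * p (m - a) := by
    rw [sum_range_succ', hp0, one_mul, Nat.sub_zero, add_comm]
    congr 1
    exact sum_congr rfl fun a ha => by
      rw [show m - (a + 1) + 1 = m - a by have := mem_range.1 ha; omega]
  rw [hp (m + 1), sum_range_succ, Nat.sub_self, hq0, mul_one, hshift, hfirst]
  ring

end Recurrence

theorem Nat.sum_range_choose_mul_choose (m r t : ℕ) :
    ∑ a ∈ range m, a.choose r * (m - 1 - a).choose t = m.choose (r + t + 1) := by
  induction m generalizing t with
  | zero => simp
  | succ m ih =>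
    simp only [Nat.add_sub_cancel]
    cases t with
    | zero =>
      simp only [Nat.choose_zero_right, mul_one, Nat.add_zero]
      rw [← Nat.sum_Icc_choose, eq_comm]
      refine sum_subset (fun a ha => ?_) fun a ha ha' => Nat.choose_eq_zero_of_lt ?_
      · simp only [mem_Icc] at ha
        exact mem_range.2 (by omega)
      · simp only [mem_Icc, mem_range] at ha ha'
        omega
    | succ t =>
      rw [sum_range_succ, Nat.sub_self, Nat.choose_zero_succ, mul_zero, add_zero,
        sum_congr rfl fun a ha => by
          rw [show m - a = m - 1 - a + 1 by have := mem_range.1 ha; omega,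
            Nat.choose_succ_succ', mul_add],
        sum_add_distrib, ih, ih, show r + (t + 1) + 1 = r + t + 1 + 1 by omega,
        Nat.choose_succ_succ' m]

def twoPowChoose (n r : ℕ) : ℕ := 2 ^ (n - r) * n.choose r

lemma twoPowChoose_eq_coeff (n r : ℕ) :
    twoPowChoose n r = ((X + C 2 : ℕ[X]) ^ n).coeff r := by
  rw [coeff_X_add_C_pow, twoPowChoose, Nat.cast_id]

lemma twoPowChoose_succ_zero (n : ℕ) : twoPowChoose (n + 1) 0 = 2 * twoPowChoose n 0 := by
  simp [twoPowChoose, pow_succ, mul_comm]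

lemma twoPowChoose_succ_succ (n r : ℕ) :
    twoPowChoose (n + 1) (r + 1) = 2 * twoPowChoose n (r + 1) + twoPowChoose n r := by
  simp only [twoPowChoose_eq_coeff, pow_succ, mul_add, coeff_add, coeff_mul_X, coeff_mul_C]
  ring

lemma twoPowChoose_mul_twoPowChoose (a b r s : ℕ) :
    twoPowChoose a r * twoPowChoose b s = 2 ^ (a + b - (r + s)) * (a.choose r * b.choose s) := by
  rcases lt_or_ge a r with h | h
  · simp [twoPowChoose, Nat.choose_eq_zero_of_lt h]
  rcases lt_or_ge b s with h' | h'
  · simp [twoPowChoose, Nat.choose_eq_zero_of_lt h']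
  rw [twoPowChoose, twoPowChoose, show a + b - (r + s) = (a - r) + (b - s) by omega, pow_add]
  ring

theorem sum_range_twoPowChoose_mul (m r s : ℕ) :
    ∑ a ∈ range m, twoPowChoose a r * twoPowChoose (m - 1 - a) s =
      twoPowChoose m (r + s + 1) := by
  rw [sum_congr rfl fun a ha => by
      rw [twoPowChoose_mul_twoPowChoose,
        show a + (m - 1 - a) - (r + s) = m - (r + s + 1) by have := mem_range.1 ha; omega],
    ← mul_sum, Nat.sum_range_choose_mul_choose, twoPowChoose]

noncomputable def avoiders (n : ℕ) : Finset (List ℕ) :=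
  (List.range n).permutations.toFinset.filter List.Avoids231

lemma mem_avoiders {n : ℕ} {l : List ℕ} :
    l ∈ avoiders n ↔ l.Perm (List.range n) ∧ l.Avoids231 := by
  simp [avoiders, List.mem_permutations]

lemma lt_of_mem_avoiders {n : ℕ} {l : List ℕ} (hl : l ∈ avoiders n) {x : ℕ} (hx : x ∈ l) :
    x < n :=
  List.mem_range.1 ((mem_avoiders.1 hl).1.subset hx)

lemma length_of_mem_avoiders {n : ℕ} {l : List ℕ} (hl : l ∈ avoiders n) : l.length = n := by
  simpa using (mem_avoiders.1 hl).1.length_eq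

lemma avoiders_zero : avoiders 0 = {[]} := by
  ext l
  simp only [mem_avoiders, List.range_zero, List.perm_nil, mem_singleton]
  exact ⟨And.left, fun h => ⟨h, h ▸ List.avoids231_nil⟩⟩

lemma append_cons_map_add_mem_avoiders {m a : ℕ} {α β : List ℕ} (ha : a ≤ m)
    (hα : α ∈ avoiders a) (hβ : β ∈ avoiders (m - a)) :
    α ++ m :: β.map (a + ·) ∈ avoiders (m + 1) := by
  obtain ⟨b, rfl⟩ := Nat.exists_eq_add_of_le ha
  rw [Nat.add_sub_cancel_left] at hβ
  have hαlt := fun x hx => lt_of_mem_avoiders hα (x := x) hx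
  have hβlt := fun y hy => lt_of_mem_avoiders hβ (x := y) hy
  rw [mem_avoiders] at *
  constructor
  · rw [List.range_succ, List.range_add]
    exact List.perm_middle.trans ((hα.1.append (hβ.1.map _)).cons _ |>.trans
      (List.perm_append_singleton _ _).symm)
  · rw [List.avoids231_append_cons_iff (by grind) (by simp; grind)]
    refine ⟨hα.2, (List.avoids231_map_iff (strictMono_id.const_add a)).2 hβ.2, ?_⟩
    simp only [List.mem_map]
    rintro x hx _ ⟨y, -, rfl⟩
    have := hαlt x hx
    omega

lemma exists_eq_append_cons_map_add {m : ℕ} {l : List ℕ} (hl : l ∈ avoiders (m + 1)) :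
    ∃ a ∈ range (m + 1), ∃ α ∈ avoiders a, ∃ β ∈ avoiders (m - a),
      l = α ++ m :: β.map (a + ·) := by
  obtain ⟨hperm, hav⟩ := mem_avoiders.1 hl
  obtain ⟨s, t, rfl⟩ := List.append_of_mem (hperm.mem_iff.2 (List.mem_range.2 m.lt_succ_self))
  have hnd := List.nodup_cons.1 (List.nodup_middle.1 (hperm.nodup_iff.2 List.nodup_range))
  have hlt : ∀ x ∈ s ++ t, x < m := fun x hx =>
    lt_of_le_of_ne (Nat.lt_succ_iff.1 (lt_of_mem_avoiders hl (by simp at hx ⊢; tauto)))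
      (by rintro rfl; exact hnd.1 hx)
  obtain ⟨hs, ht, hst⟩ := (List.avoids231_append_cons_iff (fun x hx => hlt x (by simp [hx]))
    (fun y hy => hlt y (by simp [hy]))).1 hav
  have hperm' : (s ++ t).Perm (List.range m) := by
    rw [List.range_succ] at hperm
    exact (List.perm_cons m).1
      (List.perm_middle.symm.trans (hperm.trans (List.perm_append_singleton _ _)))
  obtain ⟨hsr, β, hβ, rfl⟩ := List.perm_range_of_append_perm_range hperm' hst
  have hlen : s.length + β.length = m := by simpa using hperm'.length_eq
  refine ⟨s.length, mem_range.2 (by omega), s, mem_avoiders.2 ⟨hsr, hs⟩, β,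
    mem_avoiders.2 ⟨?_, (List.avoids231_map_iff (strictMono_id.const_add _)).1 ht⟩, rfl⟩
  rwa [List.length_map, show β.length = m - s.length by omega] at hβ

lemma eq_of_append_cons_map_add_eq {m a a' : ℕ} {α α' β β' : List ℕ} (ha : a ≤ m)
    (hα : α ∈ avoiders a) (hα' : α' ∈ avoiders a') (hβ : β ∈ avoiders (m - a))
    (h : α ++ m :: β.map (a + ·) = α' ++ m :: β'.map (a' + ·)) :
    a = a' ∧ α = α' ∧ β = β' := by
  have hmα : m ∉ α := fun hm => by have := lt_of_mem_avoiders hα hm; omega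
  have hmβ : m ∉ β.map (a + ·) := by
    simp only [List.mem_map, not_exists, not_and]
    intro y hy hm
    have := lt_of_mem_avoiders hβ hy
    omega
  obtain ⟨rfl, -, hmap⟩ := (List.append_cons_inj_of_notMem hmα hmβ).1 h
  obtain rfl : a = a' := (length_of_mem_avoiders hα).symm.trans (length_of_mem_avoiders hα')
  exact ⟨rfl, rfl, List.map_injective_iff.2 (add_right_injective a) hmap⟩

lemma bdes_append_cons_map_add {m a : ℕ} (ha : a ≤ m) {α : List ℕ} (hα : ∀ x ∈ α, x < a)
    (β : List ℕ) : (α ++ m :: β.map (a + ·)).bdes = α.bdes + ((m - a) :: β).bdes := by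
  rw [List.bdes_append_cons _ fun x hx => by have := hα x hx; omega,
    ← List.bdes_map_add a ((m - a) :: β), List.map_cons, Nat.add_sub_cancel' ha]

lemma cons_mem_avoiders_succ {b : ℕ} {t : List ℕ} :
    b :: t ∈ avoiders (b + 1) ↔ t ∈ avoiders b := by
  have hperm : (b :: t).Perm (List.range (b + 1)) ↔ t.Perm (List.range b) := by
    rw [List.range_succ]
    exact ⟨fun h => (List.perm_cons b).1 (h.trans (List.perm_append_singleton _ _)),
      fun h => (h.cons b).trans (List.perm_append_singleton _ _).symm⟩
  rw [mem_avoiders, mem_avoiders, hperm]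
  refine and_congr_right fun ht => ?_
  simpa using List.avoids231_append_cons_iff (s := []) (M := b) (by simp)
    (fun y hy => List.mem_range.1 (ht.subset hy))

lemma filter_head_avoiders_succ (b : ℕ) :
    (avoiders (b + 1)).filter (·.head? = some b) =
      (avoiders b).map ⟨(b :: ·), List.cons_injective⟩ := by
  ext (_ | ⟨x, t⟩)
  · simp
  · simp only [mem_filter, List.head?_cons, Option.some.injEq, mem_map,
      Function.Embedding.coeFn_mk, List.cons.injEq]
    constructor
    · rintro ⟨h, rfl⟩
      exact ⟨t, cons_mem_avoiders_succ.1 h, rfl, rfl⟩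
    · rintro ⟨t, ht, rfl, rfl⟩
      exact ⟨cons_mem_avoiders_succ.2 ht, rfl⟩

noncomputable def bdesPoly (n : ℕ) : ℤ[X] := ∑ l ∈ avoiders n, X ^ l.bdes

noncomputable def bdesPolyTop (n : ℕ) : ℤ[X] := ∑ l ∈ avoiders n, X ^ (n :: l).bdes

lemma bdesPoly_zero : bdesPoly 0 = 1 := by
  simp [bdesPoly, avoiders_zero]

lemma bdesPolyTop_zero : bdesPolyTop 0 = 1 := by
  simp [bdesPolyTop, avoiders_zero]

theorem bdesPoly_succ (m : ℕ) :
    bdesPoly (m + 1) = ∑ a ∈ range (m + 1), bdesPoly a * bdesPolyTop (m - a) := by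
  simp_rw [bdesPoly, bdesPolyTop, sum_mul_sum, ← pow_add, ← sum_product', sum_sigma']
  symm
  refine sum_bij (fun x _ => x.2.1 ++ m :: x.2.2.map (x.1 + ·)) ?_ ?_ ?_ ?_
  · rintro ⟨a, α, β⟩ hx
    simp only [mem_sigma, mem_product, mem_range] at hx ⊢
    exact append_cons_map_add_mem_avoiders (by omega) hx.2.1 hx.2.2
  · rintro ⟨a, α, β⟩ hx ⟨a', α', β'⟩ hx' h
    simp only [mem_sigma, mem_product, mem_range] at hx hx'
    obtain ⟨rfl, rfl, rfl⟩ := eq_of_append_cons_map_add_eq (by omega) hx.2.1 hx'.2.1 hx.2.2 h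
    rfl
  · intro l hl
    obtain ⟨a, ha, α, hα, β, hβ, rfl⟩ := exists_eq_append_cons_map_add hl
    exact ⟨⟨a, α, β⟩, mem_sigma.2 ⟨ha, mem_product.2 ⟨hα, hβ⟩⟩, rfl⟩
  · rintro ⟨a, α, β⟩ hx
    simp only [mem_sigma, mem_product, mem_range] at hx
    rw [bdes_append_cons_map_add (by omega) (fun x hx' => lt_of_mem_avoiders hx.2.1 hx')]

theorem bdesPolyTop_succ (b : ℕ) :
    bdesPolyTop (b + 1) = (1 - X) * bdesPolyTop b + X * bdesPoly (b + 1) := by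
  set S := (avoiders (b + 1)).filter (·.head? ≠ some b)
  have hsplit (f : List ℕ → ℤ[X]) :
      ∑ l ∈ avoiders (b + 1), f l = ∑ t ∈ avoiders b, f (b :: t) + ∑ l ∈ S, f l := by
    rw [← sum_filter_add_sum_filter_not _ (·.head? = some b), filter_head_avoiders_succ,
      sum_map]
    rfl
  have hS : ∀ l ∈ S, ((b + 1) :: l).bdes = l.bdes + 1 := by
    intro l hl
    obtain ⟨hl, hhead⟩ := mem_filter.1 hl
    obtain ⟨y, t, rfl⟩ := List.exists_cons_of_length_eq_add_one (length_of_mem_avoiders hl)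
    have := lt_of_mem_avoiders hl List.mem_cons_self
    simp only [List.head?_cons, ne_eq, Option.some.injEq] at hhead
    rw [List.bdes_cons_cons, if_pos (by omega), add_comm]
  have hP : bdesPoly (b + 1) = bdesPolyTop b + ∑ l ∈ S, X ^ l.bdes := hsplit _
  have hQ : bdesPolyTop (b + 1) = bdesPolyTop b + X * ∑ l ∈ S, X ^ l.bdes := by
    simp only [bdesPolyTop]
    rw [hsplit, mul_sum]
    congr 1
    · refine sum_congr rfl fun t _ => ?_
      rw [List.bdes_cons_cons, if_neg (by omega), zero_add]
    · exact sum_congr rfl fun l hl => by rw [hS l hl, pow_succ']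
  linear_combination hQ - X * hP

lemma bdesPoly_one : bdesPoly 1 = 1 := by
  simpa [bdesPoly_zero, bdesPolyTop_zero] using bdesPoly_succ 0

theorem bdesPoly_recurrence (m : ℕ) : bdesPoly (m + 2) =
    2 * bdesPoly (m + 1) + X * ∑ a ∈ range m, bdesPoly (a + 1) * bdesPoly (m - a) :=
  recurrence_of_convolution bdesPoly_zero bdesPolyTop_zero bdesPoly_succ bdesPolyTop_succ m

/-- At `n = 0` the truncated subtractions give `bdesCount 0 k = if k = 0 then 1 else 0`. -/
def bdesCount (n k : ℕ) : ℕ := 2 ^ (n - 2 * k - 1) * (n - 1).choose (2 * k) * catalan k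

lemma bdesCount_succ (n k : ℕ) : bdesCount (n + 1) k = twoPowChoose n (2 * k) * catalan k := by
  rw [bdesCount, twoPowChoose, Nat.add_sub_cancel, show n + 1 - 2 * k - 1 = n - 2 * k by omega]

lemma bdesCount_eq_zero_of_lt {n k : ℕ} (h : n < k) : bdesCount n k = 0 := by
  rw [bdesCount, Nat.choose_eq_zero_of_lt (by omega), mul_zero, zero_mul]

theorem sum_bdesCount_mul_bdesCount (m k : ℕ) :
    ∑ a ∈ range m, ∑ ij ∈ antidiagonal k, bdesCount (a + 1) ij.1 * bdesCount (m - a) ij.2 =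
      twoPowChoose m (2 * k + 1) * catalan (k + 1) := by
  rw [sum_comm, catalan_succ', mul_sum]
  refine sum_congr rfl fun ij hij => ?_
  rw [← mem_antidiagonal.1 hij, show 2 * (ij.1 + ij.2) + 1 = 2 * ij.1 + 2 * ij.2 + 1 by ring,
    ← sum_range_twoPowChoose_mul, sum_mul]
  refine sum_congr rfl fun a ha => ?_
  rw [bdesCount_succ, show m - a = m - 1 - a + 1 by have := mem_range.1 ha; omega,
    bdesCount_succ]
  ring

noncomputable def bdesCountPoly (n : ℕ) : ℤ[X] :=
  ∑ k ∈ range (n + 1), C (bdesCount n k : ℤ) * X ^ k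

lemma coeff_bdesCountPoly (n k : ℕ) : (bdesCountPoly n).coeff k = bdesCount n k := by
  simp only [bdesCountPoly, finsetSum_coeff, coeff_C_mul_X_pow, sum_ite_eq, mem_range]
  split_ifs with h
  · rfl
  · rw [bdesCount_eq_zero_of_lt (by omega), Nat.cast_zero]

theorem bdesCountPoly_recurrence (m : ℕ) : bdesCountPoly (m + 2) = 2 * bdesCountPoly (m + 1) +
    X * ∑ a ∈ range m, bdesCountPoly (a + 1) * bdesCountPoly (m - a) := by
  ext (_ | k)
  · simp only [coeff_add, coeff_ofNat_mul, coeff_X_mul_zero, add_zero, coeff_bdesCountPoly]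
    rw [bdesCount_succ, bdesCount_succ, twoPowChoose_succ_zero]
    push_cast
    ring
  · simp only [coeff_add, coeff_ofNat_mul, coeff_X_mul]
    simp only [finsetSum_coeff, coeff_mul, coeff_bdesCountPoly]
    rw [bdesCount_succ, bdesCount_succ, show 2 * (k + 1) = 2 * k + 1 + 1 by ring,
      twoPowChoose_succ_succ]
    norm_cast
    rw [sum_bdesCount_mul_bdesCount]
    ring

theorem bdesPoly_eq_bdesCountPoly : bdesPoly = bdesCountPoly :=
  eq_of_recurrence bdesPoly_recurrence bdesCountPoly_recurrence
    (by simp [bdesPoly_zero, bdesCountPoly, bdesCount])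
    (by simp [bdesPoly_one, bdesCountPoly, bdesCount, sum_range_succ])

theorem card_filter_bdes_avoiders (n k : ℕ) :
    #{l ∈ avoiders n | l.bdes = k} = bdesCount n k := by
  have h : ((bdesPoly n).coeff k : ℤ) = #{l ∈ avoiders n | l.bdes = k} := by
    simp [bdesPoly, finsetSum_coeff, coeff_X_pow, sum_boole, eq_comm]
  rw [bdesPoly_eq_bdesCountPoly, coeff_bdesCountPoly] at h
  exact_mod_cast h.symm

def oneLine {n : ℕ} (π : Equiv.Perm (Fin n)) : List ℕ := List.ofFn fun i => (π i : ℕ)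

lemma oneLine_injective (n : ℕ) : Function.Injective (oneLine (n := n)) := by
  intro π π' h
  ext i
  exact congrFun (List.ofFn_injective h) i

lemma oneLine_perm_range {n : ℕ} (π : Equiv.Perm (Fin n)) :
    (oneLine π).Perm (List.range n) := by
  have := π.ofFn_comp_perm Fin.val
  rwa [List.ofFn_eq_map (f := Fin.val), List.map_coe_finRange_eq_range] at this

lemma image_oneLine (n : ℕ) : (univ : Finset (Equiv.Perm (Fin n))).image oneLine =
    (List.range n).permutations.toFinset := by
  refine eq_of_subset_of_card_le (fun l hl => ?_) ?_
  · obtain ⟨π, -, rfl⟩ := mem_image.1 hl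
    exact List.mem_toFinset.2 (List.mem_permutations.2 (oneLine_perm_range π))
  · rw [card_image_of_injective _ (oneLine_injective n), card_univ, Fintype.card_perm,
      Fintype.card_fin, List.toFinset_card_of_nodup (List.nodup_permutations _ List.nodup_range),
      List.length_permutations, List.length_range]

lemma bdes_eq_bdes_oneLine {n : ℕ} (π : Equiv.Perm (Fin n)) : bdes π = (oneLine π).bdes := by
  rw [List.bdes_eq_card]
  simp [oneLine, bdes]

lemma contains_perm231_iff {n : ℕ} (π : Equiv.Perm (Fin n)) : Contains π perm231 ↔
    ∃ i j k : Fin n, i < j ∧ j < k ∧ π k < π i ∧ π i < π j := by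
  constructor
  · rintro ⟨f, hf, h⟩
    exact ⟨f 0, f 1, f 2, hf (by decide), hf (by decide), (h 2 0).1 (by decide),
      (h 0 1).1 (by decide)⟩
  · rintro ⟨i, j, k, hij, hjk, hki, hij'⟩
    refine ⟨![i, j, k], Fin.strictMono_iff_lt_succ.2 fun a => ?_, fun a b => ?_⟩
    · fin_cases a <;> simpa
    · fin_cases a <;> fin_cases b <;> simp [perm231] <;> omega

lemma avoids_perm231_iff {n : ℕ} (π : Equiv.Perm (Fin n)) :
    Avoids π perm231 ↔ (oneLine π).Avoids231 := by
  rw [Avoids, contains_perm231_iff, ← not_iff_not, not_not, oneLine,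
    List.not_avoids231_ofFn_iff]
  simp only [Fin.lt_def]

theorem natCard_avoids231_bdes (n k : ℕ) :
    Nat.card {π : Equiv.Perm (Fin n) // Avoids π perm231 ∧ bdes π = k} = bdesCount n k := by
  rw [Nat.card_eq_fintype_card, Fintype.card_subtype, ← card_filter_bdes_avoiders, avoiders,
    filter_filter, ← image_oneLine, filter_image, card_image_of_injective _ (oneLine_injective n)]
  simp only [avoids_perm231_iff, bdes_eq_bdes_oneLine]

theorem card_avoids231_bdes_general (n k : ℕ) :
    (k + 1) * Nat.card {π : Equiv.Perm (Fin n) // Avoids π perm231 ∧ bdes π = k} =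
    2 ^ (n - 2 * k - 1) * Nat.choose (n - 1) (2 * k) * Nat.choose (2 * k) k := by
  rw [natCard_avoids231_bdes, bdesCount, ← Nat.centralBinom_eq_two_mul_choose,
    ← succ_mul_catalan_eq_centralBinom]
  ring

/-- For `n ≥ 2k+1`, the number of 231-avoiding permutations of length `n` with exactly `k`
big descents is `(2^(n-2k-1)/(k+1)) * C(n-1,2k) * C(2k,k)`. -/
theorem card_avoids231_bdes (n k : ℕ) (hn : 2 * k + 1 ≤ n) :
    (k + 1) * Nat.card {π : Equiv.Perm (Fin n) // Avoids π perm231 ∧ bdes π = k} =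
    2 ^ (n - 2 * k - 1) * Nat.choose (n - 1) (2 * k) * Nat.choose (2 * k) k :=
  card_avoids231_bdes_general n k
end

section
/- For all n ≥ 1 and k ≥ 0, we have b_{n,k}({213, 231}) = C(n, 2k+1), where b_{n,k}({213,231}) is the number of permutations in S_n avoiding both 213 and 231 that have exactly k big descents. -/
open scoped Classical

namespace BDAux


def se {m : ℕ} (s : Fin m → Bool) (j : ℕ) : Bool := if h : j < m then s ⟨j, h⟩ else false

noncomputable def ob {m : ℕ} (s : Fin m → Bool) (i : ℕ) : ℕ :=
  ((Finset.range i).filter fun j => se s j = true).card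

lemma ob_le {m : ℕ} (s : Fin m → Bool) (i : ℕ) : ob s i ≤ i :=
  le_trans (Finset.card_filter_le _ _) (by simp)

lemma ob_succ {m : ℕ} (s : Fin m → Bool) (i : ℕ) :
    ob s (i + 1) = ob s i + (if se s i = true then 1 else 0) := by
  unfold ob
  rw [Finset.range_add_one, Finset.filter_insert]
  split
  · rw [Finset.card_insert_of_notMem (by simp)]
  · simp

lemma ob_mono {m : ℕ} (s : Fin m → Bool) {i j : ℕ} (h : i ≤ j) : ob s i ≤ ob s j :=
  Finset.card_le_card (Finset.filter_subset_filter _ (Finset.range_subset_range.2 h))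

lemma ob_add {m : ℕ} (s : Fin m → Bool) (i d : ℕ) : ob s (i + d) ≤ ob s i + d := by
  induction d with
  | zero => simp
  | succ d ih =>
    have := ob_succ s (i + d)
    have h2 : i + (d+1) = (i+d)+1 := by omega
    rw [h2, this]
    split <;> omega

lemma ob_lt_of_true {m : ℕ} (s : Fin m → Bool) {j i : ℕ} (h : j < i) (hs : se s j = true) :
    ob s j < ob s i := by
  have h1 := ob_succ s j
  have h2 := ob_mono s (show j + 1 ≤ i by omega)
  rw [hs] at h1
  simp at h1
  omega

lemma ob_le_of_false {m : ℕ} (s : Fin m → Bool) {j i : ℕ} (hs : se s j = false) (h : j < i) :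
    ob s i ≤ ob s j + (i - j - 1) := by
  have h1 := ob_succ s j
  rw [hs] at h1
  simp at h1
  have h2 := ob_add s (j + 1) (i - j - 1)
  have h3 : j + 1 + (i - j - 1) = i := by omega
  rw [h3] at h2
  omega

noncomputable def fv {m : ℕ} (s : Fin m → Bool) (i : ℕ) : ℕ :=
  if se s i = true then m - ob s i else i - ob s i

lemma fv_le {m : ℕ} (s : Fin m → Bool) {i : ℕ} (h : i ≤ m) : fv s i ≤ m := by
  unfold fv; split
  · omega
  · have := ob_le s i; omega

lemma fv_lt_of_true {m : ℕ} (s : Fin m → Bool) {a b : ℕ} (hab : a < b) (hbm : b ≤ m)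
    (ha : se s a = true) : fv s b < fv s a := by
  have h1 : ob s a < ob s b := ob_lt_of_true s hab ha
  have h2 := ob_le s b
  have h3 := ob_le s a
  by_cases hb : se s b = true <;> simp [fv, ha, hb] <;> omega

lemma fv_lt_of_false {m : ℕ} (s : Fin m → Bool) {a b : ℕ} (hab : a < b) (hbm : b ≤ m)
    (ha : se s a = false) : fv s a < fv s b := by
  have h1 := ob_le_of_false s ha hab
  have h2 := ob_le s a
  have h3 := ob_le s b
  have h4 := ob_mono s (le_of_lt hab)
  by_cases hb : se s b = true <;> simp [fv, ha, hb] <;> omega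

lemma fv_ne {m : ℕ} (s : Fin m → Bool) {a b : ℕ} (hab : a < b) (hbm : b ≤ m) :
    fv s a ≠ fv s b := by
  cases ha : se s a with
  | true => exact (fv_lt_of_true s hab hbm ha).ne'
  | false => exact (fv_lt_of_false s hab hbm ha).ne

noncomputable def toPerm {m : ℕ} (s : Fin m → Bool) : Equiv.Perm (Fin (m+1)) :=
  Equiv.ofBijective (fun i => ⟨fv s i, Nat.lt_succ_of_le (fv_le s (Nat.lt_succ_iff.mp i.2))⟩)
    (by
      rw [← Finite.injective_iff_bijective]
      intro a b hab
      simp only [Fin.mk.injEq] at hab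
      by_contra hne
      rcases lt_trichotomy (a : ℕ) (b : ℕ) with h | h | h
      · exact fv_ne s h (Nat.lt_succ_iff.mp b.2) hab
      · exact hne (Fin.ext h)
      · exact fv_ne s h (Nat.lt_succ_iff.mp a.2) hab.symm)

lemma toPerm_apply {m : ℕ} (s : Fin m → Bool) (i : Fin (m+1)) :
    (toPerm s i : ℕ) = fv s i := rfl



def P {N : ℕ} (π : Equiv.Perm (Fin N)) : Prop :=
  ∀ i j l : Fin N, i < j → i < l → ¬(π j < π i ∧ π i < π l)

lemma avoids_of_P {N : ℕ} {π : Equiv.Perm (Fin N)} (hP : P π) :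
    Avoids π perm213 ∧ Avoids π perm231 := by
  constructor <;> rintro ⟨g, hg, hiff⟩
  · have h1 : π (g 1) < π (g 0) := (hiff 1 0).mp (by decide)
    have h2 : π (g 0) < π (g 2) := (hiff 0 2).mp (by decide)
    exact hP (g 0) (g 1) (g 2) (hg (by decide)) (hg (by decide)) ⟨h1, h2⟩
  · have h1 : π (g 2) < π (g 0) := (hiff 2 0).mp (by decide)
    have h2 : π (g 0) < π (g 1) := (hiff 0 1).mp (by decide)
    exact hP (g 0) (g 2) (g 1) (hg (by decide)) (hg (by decide)) ⟨h1, h2⟩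

lemma P_of_avoids {N : ℕ} {π : Equiv.Perm (Fin N)} (h1 : Avoids π perm213)
    (h2 : Avoids π perm231) : P π := by
  rintro i j l hij hil ⟨hji, hil'⟩
  have hjl' : π j < π l := hji.trans hil'
  rcases lt_trichotomy j l with hjl | hjl | hlj
  · refine h1 ⟨![i, j, l], ?_, ?_⟩
    · intro a b hab
      fin_cases a <;> fin_cases b <;>
        simp_all [Matrix.cons_val_zero, Matrix.cons_val_one] <;>
        first
          | exact hij | exact hjl | exact hij.trans hjl
          | exact absurd hab (by decide)
    · intro a b
      fin_cases a <;> fin_cases b <;>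
        simp only [Matrix.cons_val_zero, Matrix.cons_val_one, Matrix.head_cons,
          Matrix.cons_val_two, Matrix.tail_cons] <;>
        first
          | exact iff_of_true (by decide) (by assumption)
          | exact iff_of_false (by decide) (lt_irrefl _)
          | exact iff_of_false (by decide) (asymm (by assumption))
  · subst hjl; exact absurd hil' (asymm hji)
  · refine h2 ⟨![i, l, j], ?_, ?_⟩
    · intro a b hab
      fin_cases a <;> fin_cases b <;>
        simp_all [Matrix.cons_val_zero, Matrix.cons_val_one] <;>
        first
          | exact hil | exact hlj | exact hil.trans hlj
          | exact absurd hab (by decide)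
    · intro a b
      fin_cases a <;> fin_cases b <;>
        simp only [Matrix.cons_val_zero, Matrix.cons_val_one, Matrix.head_cons,
          Matrix.cons_val_two, Matrix.tail_cons] <;>
        first
          | exact iff_of_true (by decide) (by assumption)
          | exact iff_of_false (by decide) (lt_irrefl _)
          | exact iff_of_false (by decide) (asymm (by assumption))

lemma dichotomy_of_P {N : ℕ} {π : Equiv.Perm (Fin N)} (hP : P π) (i : Fin N) :
    (∀ j, i < j → π j < π i) ∨ (∀ j, i < j → π i < π j) := by
  by_contra h
  push_neg at h
  obtain ⟨⟨j, hij, hj⟩, ⟨l, hil, hl⟩⟩ := h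
  have hj' : π i < π j := lt_of_le_of_ne hj (fun he => (ne_of_lt hij) (π.injective he.symm).symm)
  have hl' : π l < π i := lt_of_le_of_ne hl (fun he => (ne_of_lt hil) (π.injective he.symm))
  exact hP i l j hil hij ⟨hl', hj'⟩



def wd (π : Equiv.Perm (Fin (m+1))) : Fin m → Bool :=
  fun i => decide (π i.succ < π i.castSucc)

lemma se_wd (π : Equiv.Perm (Fin (m+1))) {j : ℕ} (h : j < m) :
    se (wd π) j = decide ((π ⟨j+1, by omega⟩ : Fin (m+1)) < π ⟨j, by omega⟩) := by
  simp only [se, wd, h, dif_pos]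
  congr 1

lemma ob_lt_aux {m : ℕ} (s : Fin m → Bool) {j i : ℕ} (hji : j < i) (hi : i ≤ m)
    (hsj : se s j = true) : m - ob s j ≠ m - ob s i ∧ m - ob s j > i - ob s i := by
  have h1 := ob_lt_of_true s hji hsj
  have h2 := ob_le s j
  have h3 := ob_le s i
  constructor <;> omega

theorem pi_eq_fv (π : Equiv.Perm (Fin (m+1))) (hP : P π) (i : Fin (m+1)) :
    (π i : ℕ) = fv (wd π) i := by
  set s := wd π with hs
  have key : ∀ i : ℕ, i ≤ m →
      (∀ j : Fin (m+1), i ≤ (j:ℕ) → i - ob s i ≤ (π j : ℕ) ∧ (π j : ℕ) ≤ m - ob s i) ∧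
      (∀ j : Fin (m+1), (j:ℕ) < i → (π j : ℕ) = fv s j) := by
    intro i
    induction i with
    | zero =>
      intro _
      refine ⟨fun j _ => ⟨by omega, ?_⟩, fun j hj => by omega⟩
      have h0 : ob s 0 = 0 := by simp [ob]
      have := Nat.lt_succ_iff.mp (π j).2
      omega
    | succ i ih =>
      intro hi1
      have hi : i < m := hi1
      obtain ⟨B, C⟩ := ih (by omega)
      have hoi := ob_le s i
      rcases dichotomy_of_P hP ⟨i, by omega⟩ with hmax | hmin
      · -- π i is the max of the suffix
        have hval : (π ⟨i, by omega⟩ : ℕ) = m - ob s i := by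
          have hvm : m - ob s i < m + 1 := by omega
          set v : Fin (m+1) := ⟨m - ob s i, hvm⟩ with hv
          set j := π.symm v with hj
          have hpj : π j = v := Equiv.apply_symm_apply _ _
          rcases lt_trichotomy (j : ℕ) i with hji | hji | hji
          · exfalso
            have hfj := C j hji
            have hpjv : (π j : ℕ) = m - ob s i := congrArg Fin.val hpj
            rw [hfj] at hpjv
            cases hsj : se s (j : ℕ) with
            | true =>
              simp [fv, hsj] at hpjv
              have h1 := ob_lt_of_true s hji hsj
              have h2 := ob_le s (j : ℕ)
              omega
            | false =>
              simp [fv, hsj] at hpjv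
              have h5 := ob_add s (j : ℕ) (i - j)
              have h6 : (j : ℕ) + (i - j) = i := by omega
              rw [h6] at h5
              have h7 := ob_le s (j : ℕ)
              omega
          · have : (⟨i, by omega⟩ : Fin (m+1)) = j := Fin.ext hji.symm
            rw [this, hpj]
          · exfalso
            have h8 : π j < π ⟨i, by omega⟩ := hmax j (by simp [Fin.lt_def]; omega)
            have h9 := (B ⟨i, by omega⟩ (le_refl _)).2
            rw [hpj] at h8
            have : (v : ℕ) = m - ob s i := rfl
            rw [Fin.lt_def] at h8
            omega
        have hsi : se s i = true := by
          rw [hs, se_wd π hi]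
          have := hmax ⟨i+1, by omega⟩ (by simp [Fin.lt_def])
          simpa using this
        have hob1 : ob s (i+1) = ob s i + 1 := by rw [ob_succ, hsi]; simp
        refine ⟨fun j hj => ?_, fun j hj => ?_⟩
        · have hb := B j (by omega)
          have hlt : π j < π ⟨i, by omega⟩ := hmax j (by simp [Fin.lt_def]; omega)
          rw [Fin.lt_def] at hlt
          rw [hval] at hlt
          constructor <;> omega
        · rcases lt_or_eq_of_le (Nat.lt_succ_iff.mp hj) with hji | hji
          · exact C j hji
          · have : j = ⟨i, by omega⟩ := Fin.ext hji
            rw [this, hval]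
            simp [fv, hsi]
      · -- π i is the min of the suffix
        have hval : (π ⟨i, by omega⟩ : ℕ) = i - ob s i := by
          have hvm : i - ob s i < m + 1 := by omega
          set v : Fin (m+1) := ⟨i - ob s i, hvm⟩ with hv
          set j := π.symm v with hj
          have hpj : π j = v := Equiv.apply_symm_apply _ _
          rcases lt_trichotomy (j : ℕ) i with hji | hji | hji
          · exfalso
            have hfj := C j hji
            have hpjv : (π j : ℕ) = i - ob s i := congrArg Fin.val hpj
            rw [hfj] at hpjv
            cases hsj : se s (j : ℕ) with
            | true =>
              simp [fv, hsj] at hpjv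
              have h1 := ob_lt_of_true s hji hsj
              have h2 := ob_le s (j : ℕ)
              omega
            | false =>
              simp [fv, hsj] at hpjv
              have h5 := ob_le_of_false s hsj hji
              have h7 := ob_le s (j : ℕ)
              omega
          · have : (⟨i, by omega⟩ : Fin (m+1)) = j := Fin.ext hji.symm
            rw [this, hpj]
          · exfalso
            have h8 : π ⟨i, by omega⟩ < π j := hmin j (by simp [Fin.lt_def]; omega)
            have h9 := (B ⟨i, by omega⟩ (le_refl _)).1
            rw [hpj] at h8
            have : (v : ℕ) = i - ob s i := rfl
            rw [Fin.lt_def] at h8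
            omega
        have hsi : se s i = false := by
          rw [hs, se_wd π hi]
          have := hmin ⟨i+1, by omega⟩ (by simp [Fin.lt_def])
          simpa using asymm this
        have hob1 : ob s (i+1) = ob s i := by rw [ob_succ, hsi]; simp
        refine ⟨fun j hj => ?_, fun j hj => ?_⟩
        · have hb := B j (by omega)
          have hlt : π ⟨i, by omega⟩ < π j := hmin j (by simp [Fin.lt_def]; omega)
          rw [Fin.lt_def] at hlt
          rw [hval] at hlt
          constructor <;> omega
        · rcases lt_or_eq_of_le (Nat.lt_succ_iff.mp hj) with hji | hji
          · exact C j hji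
          · have : j = ⟨i, by omega⟩ := Fin.ext hji
            rw [this, hval]
            simp [fv, hsi]
  obtain ⟨B, C⟩ := key m le_rfl
  by_cases h : (i : ℕ) < m
  · exact C i h
  · have him : (i : ℕ) = m := by have := Nat.lt_succ_iff.mp i.2; omega
    have hb := B i (by omega)
    have hse : se s m = false := by simp [se]
    have : fv s (i : ℕ) = m - ob s m := by rw [him]; simp [fv, hse]
    omega



lemma se_fin (s : Fin m → Bool) (i : Fin m) : se s (i : ℕ) = s i := by
  simp [se, i.2]

lemma P_toPerm (s : Fin m → Bool) : P (toPerm s) := by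
  rintro i j l hij hil ⟨h1, h2⟩
  rw [Fin.lt_def] at hij hil h1 h2
  rw [toPerm_apply, toPerm_apply] at h1 h2
  cases hsi : se s (i : ℕ) with
  | true =>
    have := fv_lt_of_true s hil (Nat.lt_succ_iff.mp l.2) hsi
    omega
  | false =>
    have := fv_lt_of_false s hij (Nat.lt_succ_iff.mp j.2) hsi
    omega

lemma toPerm_wd (π : Equiv.Perm (Fin (m+1))) (hP : P π) : toPerm (wd π) = π := by
  apply Equiv.ext
  intro i
  apply Fin.ext
  rw [toPerm_apply, pi_eq_fv π hP i]

lemma wd_toPerm (s : Fin m → Bool) : wd (toPerm s) = s := by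
  funext i
  have him : (i : ℕ) + 1 ≤ m := i.2
  unfold wd
  cases hsi : s i with
  | true =>
    have hse : se s (i : ℕ) = true := by rw [se_fin]; exact hsi
    have := fv_lt_of_true s (Nat.lt_succ_self (i:ℕ)) him hse
    simp only [decide_eq_true_eq, Fin.lt_def, toPerm_apply, Fin.val_succ,
      Fin.coe_castSucc, Nat.succ_eq_add_one]
    exact this
  | false =>
    have hse : se s (i : ℕ) = false := by rw [se_fin]; exact hsi
    have := fv_lt_of_false s (Nat.lt_succ_self (i:ℕ)) him hse
    simp only [decide_eq_false_iff_not, Fin.lt_def, toPerm_apply, Fin.val_succ,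
      Fin.coe_castSucc, Nat.succ_eq_add_one]
    have hy : fv s ((i:ℕ).succ) = fv s ((i:ℕ)+1) := rfl
    rw [hy]
    omega

noncomputable def desF (s : Fin m → Bool) : ℕ :=
  ((Finset.range m).filter fun i => i + 1 < m ∧ se s i = true ∧ se s (i+1) = false).card

lemma bdes_toPerm (s : Fin m → Bool) : bdes (toPerm s) = desF s := by
  unfold bdes desF
  apply Finset.card_bij (fun a _ => a)
  · intro a ha
    simp only [Finset.mem_filter, Finset.mem_range] at ha ⊢
    obtain ⟨ham, hk, hlt⟩ := ha
    rw [toPerm_apply, toPerm_apply] at hlt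
    have hob := ob_succ s a
    have hol := ob_le s a
    have ham' : a < m := by omega
    cases hsa : se s a with
    | false =>
      exfalso
      rw [hsa] at hob
      simp at hob
      cases hsa1 : se s (a+1) <;> simp [fv, hsa, hsa1, hob] at hlt <;> omega
    | true =>
      rw [hsa] at hob
      simp at hob
      cases hsa1 : se s (a+1) with
      | true => exfalso; simp [fv, hsa, hsa1, hob] at hlt; omega
      | false =>
        refine ⟨by omega, ?_, rfl, rfl⟩
        simp [fv, hsa, hsa1, hob] at hlt
        omega
  · intro a _ b _ h; exact h
  · intro b hb
    simp only [Finset.mem_filter, Finset.mem_range] at hb ⊢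
    obtain ⟨hbm, hb1, hsb, hsb1⟩ := hb
    refine ⟨b, ⟨by omega, by omega, ?_⟩, rfl⟩
    rw [toPerm_apply, toPerm_apply]
    have hob := ob_succ s b
    have hol := ob_le s b
    rw [hsb] at hob
    simp at hob
    simp [fv, hsb, hsb1, hob]
    omega

lemma se_snoc (s : Fin m → Bool) (b : Bool) (j : ℕ) :
    se (Fin.snoc s b : Fin (m+1) → Bool) j =
      if h : j < m then se s j else if j = m then b else false := by
  unfold se
  rcases lt_trichotomy j m with h | h | h
  · rw [dif_pos h, dif_pos (by omega), dif_pos h]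
    have : (⟨j, by omega⟩ : Fin (m+1)) = (⟨j, h⟩ : Fin m).castSucc := rfl
    rw [this, Fin.snoc_castSucc]
  · subst h
    rw [dif_pos (by omega), dif_neg (lt_irrefl _), if_pos rfl]
    have : (⟨j, by omega⟩ : Fin (j+1)) = Fin.last j := rfl
    rw [this, Fin.snoc_last]
  · rw [dif_neg (by omega), dif_neg (by omega), if_neg (by omega)]

lemma desF_one (s : Fin 1 → Bool) : desF s = 0 := by
  unfold desF
  rw [Finset.card_eq_zero]
  ext i
  simp only [Finset.mem_filter, Finset.mem_range, Finset.notMem_empty, iff_false, not_and]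
  intro h1 h2
  omega

lemma desF_snoc_snoc (s : Fin m → Bool) (c b : Bool) :
    desF (Fin.snoc (Fin.snoc s c : Fin (m+1) → Bool) b : Fin (m+2) → Bool) =
      desF (Fin.snoc s c : Fin (m+1) → Bool) + (if c = true ∧ b = false then 1 else 0) := by
  set t : Fin (m+1) → Bool := Fin.snoc s c with ht
  set u : Fin (m+2) → Bool := Fin.snoc t b with hu
  have hse : ∀ j, j < m + 1 → se u j = se t j := by
    intro j hj
    rw [hu, se_snoc, dif_pos hj]
  have hsem1 : se u (m+1) = b := by
    rw [hu, se_snoc, dif_neg (lt_irrefl _), if_pos rfl]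
  have hsetm : se t m = c := by
    rw [ht, se_snoc, dif_neg (lt_irrefl _), if_pos rfl]
  have hR : desF t = ((Finset.range m).filter fun i =>
      i + 1 < m + 1 ∧ se t i = true ∧ se t (i+1) = false).card := by
    unfold desF
    rw [Finset.range_add_one, Finset.filter_insert, if_neg (by omega)]
  have hL : desF u = ((Finset.range (m+1)).filter fun i =>
      i + 1 < m + 2 ∧ se u i = true ∧ se u (i+1) = false).card := by
    unfold desF
    rw [Finset.range_add_one, Finset.filter_insert, if_neg (by omega)]
  have hcong : ((Finset.range m).filter fun i =>
        i + 1 < m + 2 ∧ se u i = true ∧ se u (i+1) = false) =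
      ((Finset.range m).filter fun i =>
        i + 1 < m + 1 ∧ se t i = true ∧ se t (i+1) = false) := by
    apply Finset.filter_congr
    intro i hi
    rw [Finset.mem_range] at hi
    rw [hse i (by omega), hse (i+1) (by omega)]
    constructor
    · rintro ⟨_, h2, h3⟩; exact ⟨by omega, h2, h3⟩
    · rintro ⟨_, h2, h3⟩; exact ⟨by omega, h2, h3⟩
  rw [hL, hR, Finset.range_add_one, Finset.filter_insert, ← hcong]
  by_cases hc : c = true ∧ b = false
  · rw [if_pos ⟨by omega, by rw [hse m (by omega), hsetm]; exact hc.1,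
      by rw [hsem1]; exact hc.2⟩, if_pos hc,
      Finset.card_insert_of_notMem (by simp)]
  · rw [if_neg ?_, if_neg hc, add_zero]
    rw [hse m (by omega), hsetm, hsem1]
    tauto

def snocEquiv (m : ℕ) : ((Fin m → Bool) × Bool) ≃ (Fin (m+1) → Bool) where
  toFun p := Fin.snoc p.1 p.2
  invFun t := (Fin.init t, t (Fin.last m))
  left_inv p := by simp
  right_inv t := by simp

def boolSplit {α : Type*} (R : α × Bool → Prop) :
    {p : α × Bool // R p} ≃ {a // R (a, false)} ⊕ {a // R (a, true)} where
  toFun := fun ⟨⟨a, b⟩, h⟩ =>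
    match b, h with
    | false, h => Sum.inl ⟨a, h⟩
    | true, h => Sum.inr ⟨a, h⟩
  invFun := Sum.elim (fun p => ⟨(p.1, false), p.2⟩) (fun p => ⟨(p.1, true), p.2⟩)
  left_inv := by rintro ⟨⟨a, b⟩, h⟩; cases b <;> rfl
  right_inv := by rintro (⟨a, h⟩ | ⟨a, h⟩) <;> rfl

lemma card_split (m : ℕ) (Q : (Fin (m+1) → Bool) → Prop) :
    Nat.card {s : Fin (m+1) → Bool // Q s} =
      Nat.card {s : Fin m → Bool // Q (Fin.snoc s false)} +
      Nat.card {s : Fin m → Bool // Q (Fin.snoc s true)} := by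
  have e1 : {s : Fin (m+1) → Bool // Q s} ≃
      {p : (Fin m → Bool) × Bool // Q (Fin.snoc p.1 p.2)} :=
    (Equiv.subtypeEquiv (snocEquiv m).symm (by
      intro s
      constructor
      · intro h
        show Q (Fin.snoc _ _)
        have : Fin.snoc (Fin.init s) (s (Fin.last m)) = s := Fin.snoc_init_self s
        rw [show (((snocEquiv m).symm s).1 : Fin m → Bool) = Fin.init s from rfl,
          show (((snocEquiv m).symm s).2 : Bool) = s (Fin.last m) from rfl, this]
        exact h
      · intro h
        have : Fin.snoc (Fin.init s) (s (Fin.last m)) = s := Fin.snoc_init_self s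
        rw [show (((snocEquiv m).symm s).1 : Fin m → Bool) = Fin.init s from rfl,
          show (((snocEquiv m).symm s).2 : Bool) = s (Fin.last m) from rfl, this] at h
        exact h))
  rw [Nat.card_congr e1,
    Nat.card_congr (boolSplit (fun p : (Fin m → Bool) × Bool => Q (Fin.snoc p.1 p.2))),
    Nat.card_sum]

noncomputable def F (m : ℕ) (b : Bool) (k : ℕ) : ℕ :=
  Nat.card {s : Fin m → Bool // desF (Fin.snoc s b : Fin (m+1) → Bool) = k}

lemma card_eq_ite (m k : ℕ) (f : (Fin m → Bool) → ℕ) (hf : ∀ s, f s = 0) :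
    Nat.card {s : Fin m → Bool // f s = k} = if k = 0 then 2 ^ m else 0 := by
  rcases Nat.eq_zero_or_pos k with hk | hk
  · subst hk
    rw [if_pos rfl]
    rw [Nat.card_congr (Equiv.subtypeUnivEquiv (fun s => hf s))]
    simp [Nat.card_eq_fintype_card]
  · rw [if_neg (by omega)]
    have : IsEmpty {s : Fin m → Bool // f s = k} := by
      constructor
      rintro ⟨s, hs⟩
      rw [hf s] at hs
      omega
    exact Nat.card_of_isEmpty

lemma F_spec (m : ℕ) : ∀ k, F m false k = Nat.choose (m+1) (2*k) ∧
    F m true k = Nat.choose (m+1) (2*k+1) := by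
  induction m with
  | zero =>
    intro k
    have hall : ∀ (b : Bool), F 0 b k = if k = 0 then 1 else 0 := by
      intro b
      unfold F
      rw [card_eq_ite 0 k _ (fun s => desF_one _)]
      simp
    rcases Nat.eq_zero_or_pos k with hk | hk
    · subst hk; simp [hall]
    · constructor <;> rw [hall] <;> rw [if_neg (by omega)]
      · rw [Nat.choose_eq_zero_of_lt (by omega)]
      · rw [Nat.choose_eq_zero_of_lt (by omega)]
  | succ m ih =>
    intro k
    have hsplit : ∀ (b : Bool), F (m+1) b k =
        Nat.card {s : Fin m → Bool //
          desF (Fin.snoc (Fin.snoc s false : Fin (m+1) → Bool) b : Fin (m+2) → Bool) = k} +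
        Nat.card {s : Fin m → Bool //
          desF (Fin.snoc (Fin.snoc s true : Fin (m+1) → Bool) b : Fin (m+2) → Bool) = k} := by
      intro b
      unfold F
      exact card_split m
        (fun s : Fin (m+1) → Bool => desF (Fin.snoc s b : Fin (m+2) → Bool) = k)
    constructor
    · -- b = false
      rw [hsplit false]
      have h1 : ∀ s : Fin m → Bool,
          (desF (Fin.snoc (Fin.snoc s false : Fin (m+1) → Bool) false : Fin (m+2) → Bool) = k)
          ↔ (desF (Fin.snoc s false : Fin (m+1) → Bool) = k) := by
        intro s
        rw [desF_snoc_snoc]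
        simp
      rw [Nat.card_congr (Equiv.subtypeEquivRight h1)]
      rcases Nat.eq_zero_or_pos k with hk | hk
      · subst hk
        have h2 : IsEmpty {s : Fin m → Bool //
            desF (Fin.snoc (Fin.snoc s true : Fin (m+1) → Bool) false : Fin (m+2) → Bool) = 0} := by
          constructor
          rintro ⟨s, hs⟩
          rw [desF_snoc_snoc] at hs
          simp at hs
        have hz : Nat.card {s : Fin m → Bool //
            desF (Fin.snoc (Fin.snoc s true : Fin (m+1) → Bool) false : Fin (m+2) → Bool) = 0} = 0 :=
          @Nat.card_of_isEmpty _ h2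
        rw [hz, add_zero]
        have e := (ih 0).1
        unfold F at e
        rw [e]
        simp
      · obtain ⟨k', rfl⟩ : ∃ k', k = k' + 1 := ⟨k - 1, by omega⟩
        have h2 : ∀ s : Fin m → Bool,
            (desF (Fin.snoc (Fin.snoc s true : Fin (m+1) → Bool) false : Fin (m+2) → Bool) = k' + 1)
            ↔ (desF (Fin.snoc s true : Fin (m+1) → Bool) = k') := by
          intro s
          rw [desF_snoc_snoc]
          simp
        rw [Nat.card_congr (Equiv.subtypeEquivRight h2)]
        have e1 := (ih (k'+1)).1
        have e2 := (ih k').2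
        unfold F at e1 e2
        rw [e1, e2]
        have h3 : 2 * (k' + 1) = (2 * k' + 1) + 1 := by ring
        rw [h3, Nat.choose_succ_succ (m+1) (2*k'+1)]
        simp only [Nat.succ_eq_add_one]
        omega
    · -- b = true
      rw [hsplit true]
      have h1 : ∀ s : Fin m → Bool,
          (desF (Fin.snoc (Fin.snoc s false : Fin (m+1) → Bool) true : Fin (m+2) → Bool) = k)
          ↔ (desF (Fin.snoc s false : Fin (m+1) → Bool) = k) := by
        intro s; rw [desF_snoc_snoc]; simp
      have h2 : ∀ s : Fin m → Bool,
          (desF (Fin.snoc (Fin.snoc s true : Fin (m+1) → Bool) true : Fin (m+2) → Bool) = k)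
          ↔ (desF (Fin.snoc s true : Fin (m+1) → Bool) = k) := by
        intro s; rw [desF_snoc_snoc]; simp
      rw [Nat.card_congr (Equiv.subtypeEquivRight h1),
        Nat.card_congr (Equiv.subtypeEquivRight h2)]
      have e1 := (ih k).1
      have e2 := (ih k).2
      unfold F at e1 e2
      rw [e1, e2, Nat.choose_succ_succ (m+1) (2*k)]

theorem count_desF (m k : ℕ) :
    Nat.card {s : Fin m → Bool // desF s = k} = Nat.choose (m+1) (2*k+1) := by
  cases m with
  | zero =>
    rw [card_eq_ite 0 k _ (fun s => by unfold desF; simp)]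
    rcases Nat.eq_zero_or_pos k with hk | hk
    · subst hk; simp
    · rw [if_neg (by omega), Nat.choose_eq_zero_of_lt (by omega)]
  | succ m =>
    rw [card_split m (fun s : Fin (m+1) → Bool => desF s = k)]
    have e1 := (F_spec m k).1
    have e2 := (F_spec m k).2
    unfold F at e1 e2
    rw [e1, e2, Nat.choose_succ_succ (m+1) (2*k)]

end BDAux

/-- For `n ≥ 1`, the number of permutations of length `n` avoiding both 213 and 231 with
exactly `k` big descents is `C(n, 2k+1)`. -/
theorem card_avoids213_231_bdes (n k : ℕ) (hn : 1 ≤ n) :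
    Nat.card {π : Equiv.Perm (Fin n) // (Avoids π perm213 ∧ Avoids π perm231) ∧ bdes π = k} =
    Nat.choose n (2 * k + 1) := by
  obtain ⟨m, rfl⟩ : ∃ m, n = m + 1 := ⟨n - 1, by omega⟩
  have e : {π : Equiv.Perm (Fin (m+1)) // (Avoids π perm213 ∧ Avoids π perm231) ∧ bdes π = k}
      ≃ {s : Fin m → Bool // BDAux.desF s = k} :=
    { toFun := fun p => ⟨BDAux.wd p.1, by
        have hP := BDAux.P_of_avoids p.2.1.1 p.2.1.2
        have h1 : BDAux.toPerm (BDAux.wd p.1) = p.1 := BDAux.toPerm_wd p.1 hP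
        have h2 := BDAux.bdes_toPerm (BDAux.wd p.1)
        rw [h1] at h2
        rw [← h2]
        exact p.2.2⟩
      invFun := fun s => ⟨BDAux.toPerm s.1,
        ⟨BDAux.avoids_of_P (BDAux.P_toPerm s.1),
          by rw [BDAux.bdes_toPerm]; exact s.2⟩⟩
      left_inv := fun p =>
        Subtype.ext (BDAux.toPerm_wd p.1 (BDAux.P_of_avoids p.2.1.1 p.2.1.2))
      right_inv := fun s => Subtype.ext (BDAux.wd_toPerm s.1) }
  rw [Nat.card_congr e, BDAux.count_desF]
end

section
/- For all n ≥ 1 and k ≥ 0, we have b_{n,k}({213, 312}) = C(n, 2k+1), where b_{n,k}({213,312}) is the number of permutations in S_n avoiding both 213 and 312 that have exactly k big descents. -/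
open scoped Classical

/-!
Avoiding 213 and 312 means having no valley, i.e. being unimodal. A unimodal permutation is
determined by the set `D` of values to the right of its maximum: reading the values from the
largest down, each one is placed at the left end of the positions used so far if it is not in
`D` and at the right end if it is. Its big descents end exactly at the values `b ∈ D` with
`b + 1 ∉ D` and `b + 1 < n - 1`, so `bdes` counts the maximal runs of `D ⊆ {0, …, n - 2}` that
end before `n - 2`. Twice this number plus `[n - 2 ∈ D]` is the number of letter changes in the
word `0 χ_D`, which Pascal's rule shows to be distributed as `C(n - 1, j)`; the two values
`j = 2k, 2k + 1` then add up to `C(n, 2k + 1)`.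
-/

open Finset Equiv

def runEnds (m : ℕ) (D : Finset ℕ) : Finset ℕ := {b ∈ D | b + 1 < m ∧ b + 1 ∉ D}

/-- The number of letter changes in the binary word `0 χ_D(0) χ_D(1) ⋯ χ_D(m - 1)`: two for
every run of `D` that ends before `m - 1`, and one more if `m - 1 ∈ D`. -/
def changeCount (m : ℕ) (D : Finset ℕ) : ℕ := 2 * #(runEnds m D) + if m - 1 ∈ D then 1 else 0

section Runs

variable {m : ℕ} {D : Finset ℕ}

lemma runEnds_succ (hD : D ⊆ range m) :
    runEnds (m + 1) D = if m - 1 ∈ D then insert (m - 1) (runEnds m D) else runEnds m D := by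
  have hm : ∀ b ∈ D, b < m := fun b hb => mem_range.1 (hD hb)
  split_ifs <;> ext b <;> simp only [runEnds, mem_filter, mem_insert] <;> grind

lemma runEnds_succ_insert (hD : D ⊆ range m) : runEnds (m + 1) (insert m D) = runEnds m D := by
  have hm : ∀ b ∈ D, b < m := fun b hb => mem_range.1 (hD hb)
  ext b
  simp only [runEnds, mem_filter, mem_insert]
  grind

lemma changeCount_succ (hD : D ⊆ range m) :
    changeCount (m + 1) D = changeCount m D + if m - 1 ∈ D then 1 else 0 := by
  have hmD : m ∉ D := fun h => by simpa using hD h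
  have hr : #(runEnds (m + 1) D) = #(runEnds m D) + if m - 1 ∈ D then 1 else 0 := by
    rw [runEnds_succ hD]
    split_ifs with h
    · exact card_insert_of_notMem (by simp [runEnds]; omega)
    · rfl
  simp only [changeCount, hr, Nat.add_sub_cancel, hmD, if_false]
  split_ifs <;> ring

lemma changeCount_succ_insert (hD : D ⊆ range m) :
    changeCount (m + 1) (insert m D) + (if m - 1 ∈ D then 1 else 0) = changeCount m D + 1 := by
  simp only [changeCount, runEnds_succ_insert hD, Nat.add_sub_cancel, mem_insert_self, if_true]
  ring

lemma card_filter_powerset_insert {α : Type*} [DecidableEq α] {s : Finset α} {a : α} (ha : a ∉ s)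
    (p : Finset α → Prop) [DecidablePred p] :
    #{t ∈ (insert a s).powerset | p t} =
      #{t ∈ s.powerset | p t} + #{t ∈ s.powerset | p (insert a t)} := by
  simp only [card_filter]
  exact sum_powerset_insert ha _

theorem card_filter_powerset_changeCount (m j : ℕ) :
    #{D ∈ (range m).powerset | changeCount m D = j} = m.choose j := by
  induction m generalizing j with
  | zero => cases j <;> simp [changeCount, runEnds, filter_singleton]
  | succ m ih =>
    have pair : ∀ D ∈ (range m).powerset,
        (if changeCount (m + 1) D = j then 1 else 0) +
            (if changeCount (m + 1) (insert m D) = j then 1 else 0) =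
          (if changeCount m D = j then 1 else 0) + (if changeCount m D + 1 = j then 1 else 0) := by
      intro D hD
      have h1 := changeCount_succ (mem_powerset.1 hD)
      have h2 := changeCount_succ_insert (mem_powerset.1 hD)
      split_ifs at h1 h2 <;> split_ifs <;> omega
    rw [range_add_one, card_filter_powerset_insert notMem_range_self]
    simp only [card_filter, ← sum_add_distrib]
    rw [sum_congr rfl pair, sum_add_distrib, ← card_filter, ← card_filter, ih]
    cases j with
    | zero => simp
    | succ j => simp [ih, Nat.choose_succ_succ', add_comm]

theorem card_filter_powerset_runEnds (m k : ℕ) :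
    #{D ∈ (range m).powerset | #(runEnds m D) = k} = (m + 1).choose (2 * k + 1) := by
  have hsplit : ∀ D : Finset ℕ,
      #(runEnds m D) = k ↔ changeCount m D = 2 * k ∨ changeCount m D = 2 * k + 1 := by
    intro D
    unfold changeCount
    split_ifs <;> omega
  rw [filter_congr fun D _ => hsplit D, filter_or, card_union_of_disjoint,
    card_filter_powerset_changeCount, card_filter_powerset_changeCount, Nat.choose_succ_succ']
  exact disjoint_filter.2 fun D _ h => by omega

end Runs

variable {n : ℕ}

def NoValley (π : Perm (Fin n)) : Prop :=
  ∀ ⦃i j k : Fin n⦄, i < j → j < k → π j < π i → π j < π k → False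

lemma contains_of_strictMono {m : ℕ} {π : Perm (Fin n)} {σ : Perm (Fin m)} {f : Fin m → Fin n}
    (hf : StrictMono f) (h : ∀ a b, σ a < σ b → π (f a) < π (f b)) : Contains π σ := by
  refine ⟨f, hf, fun a b => ⟨h a b, fun hab => ?_⟩⟩
  rcases lt_trichotomy (σ a) (σ b) with hlt | heq | hgt
  · exact hlt
  · rw [σ.injective heq] at hab; exact absurd hab (lt_irrefl _)
  · exact absurd (h b a hgt) hab.not_gt

lemma strictMono_vec3 {i j k : Fin n} (hij : i < j) (hjk : j < k) : StrictMono ![i, j, k] := by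
  simp [Fin.strictMono_iff_lt_succ, Fin.forall_fin_succ, hij, hjk]

lemma not_noValley_of_contains {π : Perm (Fin n)} {σ : Perm (Fin 3)} (hσ : σ 1 < σ 0 ∧ σ 1 < σ 2)
    (h : Contains π σ) : ¬ NoValley π := by
  obtain ⟨f, hf, hfσ⟩ := h
  exact fun hπ => hπ (hf (by decide : (0 : Fin 3) < 1)) (hf (by decide : (1 : Fin 3) < 2))
    ((hfσ 1 0).1 hσ.1) ((hfσ 1 2).1 hσ.2)

theorem avoids213_312_iff_noValley (π : Perm (Fin n)) :
    Avoids π perm213 ∧ Avoids π perm312 ↔ NoValley π := by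
  refine ⟨fun ⟨h213, h312⟩ i j k hij hjk hji hjk' => ?_, fun hπ => ⟨?_, ?_⟩⟩
  · rcases lt_or_gt_of_ne (π.injective.ne (hij.trans hjk).ne) with hik | hki
    · refine h213 (contains_of_strictMono (strictMono_vec3 hij hjk) fun a b hab => ?_)
      fin_cases a <;> fin_cases b <;> simp_all [perm213]
    · refine h312 (contains_of_strictMono (strictMono_vec3 hij hjk) fun a b hab => ?_)
      fin_cases a <;> fin_cases b <;> simp_all [perm312]
  · exact fun h => not_noValley_of_contains (by decide) h hπ
  · exact fun h => not_noValley_of_contains (by decide) h hπ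

lemma card_filter_Iio_le_of_le {α : Type*} [Preorder α] [LocallyFiniteOrderBot α] {p : α → Prop}
    [DecidablePred p] {a b : α} (hab : a ≤ b) : #{x ∈ Iio a | p x} ≤ #{x ∈ Iio b | p x} :=
  card_le_card (filter_subset_filter _ (Iio_subset_Iio hab))

lemma card_filter_Iio_lt_of_lt {α : Type*} [Preorder α] [LocallyFiniteOrderBot α] {p : α → Prop}
    [DecidablePred p] {a b : α} (hab : a < b) (ha : p a) :
    #{x ∈ Iio a | p x} < #{x ∈ Iio b | p x} :=
  card_lt_card <| (ssubset_iff_of_subset (filter_subset_filter _ (Iio_subset_Iio hab.le))).2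
    ⟨a, by simp [hab, ha], by simp⟩

lemma card_filter_perm_lt (e : Perm (Fin n)) (i : Fin n) : #{u | e u < i} = i := by
  rw [← Fin.card_Iio i]
  exact card_equiv e (by simp)

lemma card_filter_lt_perm (e : Perm (Fin n)) (i : Fin n) : #{u | i < e u} = n - 1 - i := by
  rw [← Fin.card_Ioi i]
  exact card_equiv e (by simp)

/-- `σ` is read as the position map `π⁻¹` of a permutation `π`: each value outside `D` lies to
the left of all larger values, each value in `D` to their right. These are the inverses of the
unimodal permutations whose values after the maximum form `D`. -/
def UnimodalPositions (σ : Fin n → Fin n) (D : Finset ℕ) : Prop :=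
  ∀ ⦃v u : Fin n⦄, v < u → ((v : ℕ) ∈ D → σ u < σ v) ∧ ((v : ℕ) ∉ D → σ v < σ u)

namespace UnimodalPositions

variable {σ : Fin n → Fin n} {D : Finset ℕ}

lemma injective (h : UnimodalPositions σ D) : Function.Injective σ := by
  intro v u hvu
  by_contra hne
  rcases lt_or_gt_of_ne hne with hlt | hlt
  · by_cases hv : (v : ℕ) ∈ D
    · exact (h hlt).1 hv |>.ne hvu.symm
    · exact (h hlt).2 hv |>.ne hvu
  · by_cases hu : (u : ℕ) ∈ D
    · exact (h hlt).1 hu |>.ne hvu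
    · exact (h hlt).2 hu |>.ne hvu.symm

lemma lt_iff_of_notMem (h : UnimodalPositions σ D) {v : Fin n} (hv : (v : ℕ) ∉ D) (u : Fin n) :
    σ u < σ v ↔ u < v ∧ (u : ℕ) ∉ D := by
  refine ⟨fun hu => ?_, fun ⟨huv, hu⟩ => (h huv).2 hu⟩
  rcases lt_trichotomy u v with huv | rfl | hvu
  · exact ⟨huv, fun hu' => ((h huv).1 hu').not_gt hu⟩
  · exact absurd hu (lt_irrefl _)
  · exact absurd hu ((h hvu).2 hv).not_gt

lemma lt_iff_of_mem (h : UnimodalPositions σ D) {v : Fin n} (hv : (v : ℕ) ∈ D) (u : Fin n) :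
    σ v < σ u ↔ u < v ∧ (u : ℕ) ∈ D := by
  refine ⟨fun hu => ?_, fun ⟨huv, hu⟩ => (h huv).1 hu⟩
  rcases lt_trichotomy u v with huv | rfl | hvu
  · exact ⟨huv, by_contra fun hu' => ((h huv).2 hu').not_gt hu⟩
  · exact absurd hu (lt_irrefl _)
  · exact absurd hu ((h hvu).1 hv).not_gt

end UnimodalPositions

/-- Values outside `D` fill the positions from the left, values in `D` from the right, both in
increasing order. -/
def unimodalPos (n : ℕ) (D : Finset ℕ) (v : Fin n) : Fin n :=
  if (v : ℕ) ∈ D then ⟨n - 1 - #{u ∈ Iio v | ↑u ∈ D}, by have := v.isLt; omega⟩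
  else ⟨#{u ∈ Iio v | ↑u ∉ D}, (card_filter_le _ _).trans_lt (by simp)⟩

lemma unimodalPositions_unimodalPos (D : Finset ℕ) : UnimodalPositions (unimodalPos n D) D := by
  intro v u hvu
  have hsplit : ∀ w : Fin n, #{x ∈ Iio w | ↑x ∈ D} + #{x ∈ Iio w | ↑x ∉ D} = w :=
    fun w => (card_filter_add_card_filter_not _).trans (Fin.card_Iio w)
  have hv := hsplit v
  have hu := hsplit u
  have hin := card_filter_Iio_le_of_le (p := fun x : Fin n => (x : ℕ) ∈ D) hvu.le
  have hout := card_filter_Iio_le_of_le (p := fun x : Fin n => (x : ℕ) ∉ D) hvu.le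
  have hun := u.isLt
  constructor
  · intro hvD
    have := card_filter_Iio_lt_of_lt (p := fun x : Fin n => (x : ℕ) ∈ D) hvu hvD
    unfold unimodalPos
    split_ifs <;> simp only [Fin.mk_lt_mk] <;> omega
  · intro hvD
    have := card_filter_Iio_lt_of_lt (p := fun x : Fin n => (x : ℕ) ∉ D) hvu hvD
    unfold unimodalPos
    split_ifs <;> simp only [Fin.mk_lt_mk] <;> omega

noncomputable def unimodal (n : ℕ) (D : Finset ℕ) : Perm (Fin n) :=
  (Equiv.ofBijective _ (unimodalPositions_unimodalPos D).injective.bijective_of_finite).symm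

lemma unimodalPositions_unimodal (D : Finset ℕ) : UnimodalPositions (unimodal n D).symm D := by
  simpa [unimodal] using unimodalPositions_unimodalPos D

/-- For a unimodal permutation, the values after its maximum. -/
def decreasingPart (π : Perm (Fin n)) : Finset ℕ :=
  ({v | ∃ u, v < u ∧ π.symm u < π.symm v} : Finset (Fin n)).map Fin.valEmbedding

lemma val_mem_decreasingPart {π : Perm (Fin n)} {v : Fin n} :
    (v : ℕ) ∈ decreasingPart π ↔ ∃ u, v < u ∧ π.symm u < π.symm v := by
  simp [decreasingPart, Fin.val_inj]

lemma decreasingPart_subset (π : Perm (Fin n)) : decreasingPart π ⊆ range (n - 1) := by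
  intro x hx
  obtain ⟨v, hv, rfl⟩ := mem_map.1 hx
  obtain ⟨u, hvu, -⟩ := (mem_filter.1 hv).2
  have := u.isLt
  simp only [Fin.valEmbedding_apply, mem_range]
  omega

lemma NoValley.unimodalPositions {π : Perm (Fin n)} (hπ : NoValley π) :
    UnimodalPositions π.symm (decreasingPart π) := by
  intro v u hvu
  constructor
  · intro hv
    obtain ⟨w, hvw, hw⟩ := val_mem_decreasingPart.1 hv
    refine lt_of_not_ge fun hu => hπ hw ((lt_or_eq_of_le hu).resolve_right ?_) ?_ ?_
    · exact fun he => hvu.ne (π.symm.injective he)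
    · simpa using hvw
    · simpa using hvu
  · intro hv
    refine lt_of_le_of_ne (not_lt.1 fun hu => hv (val_mem_decreasingPart.2 ⟨u, hvu, hu⟩)) ?_
    exact fun he => hvu.ne (π.symm.injective he)

namespace UnimodalPositions

variable {π : Perm (Fin n)} {D : Finset ℕ}

lemma eq_unimodalPos {e : Perm (Fin n)} (h : UnimodalPositions e D) : ⇑e = unimodalPos n D := by
  funext v
  unfold unimodalPos
  split_ifs with hv
  · have hcard : #{u ∈ Iio v | ↑u ∈ D} = #{u | e v < e u} := by
      congr 1; ext u; simp [h.lt_iff_of_mem hv]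
    refine Fin.ext ?_
    dsimp only
    rw [hcard, card_filter_lt_perm]
    have := (e v).isLt
    omega
  · have hcard : #{u ∈ Iio v | ↑u ∉ D} = #{u | e u < e v} := by
      congr 1; ext u; simp [h.lt_iff_of_notMem hv]
    exact Fin.ext (by dsimp only; rw [hcard, card_filter_perm_lt])

lemma eq_unimodal (h : UnimodalPositions π.symm D) : π = unimodal n D :=
  symm_bijective.injective <| DFunLike.coe_injective <|
    h.eq_unimodalPos.trans (unimodalPositions_unimodal D).eq_unimodalPos.symm

lemma noValley (h : UnimodalPositions π.symm D) : NoValley π := by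
  intro i j k hij hjk hji hjk'
  have hi := h hji
  have hk := h hjk'
  simp only [symm_apply_apply] at hi hk
  by_cases hj : (π j : ℕ) ∈ D
  · exact (hk.1 hj).not_gt hjk
  · exact (hi.2 hj).not_gt hij

lemma decreasingPart_eq (h : UnimodalPositions π.symm D) (hD : D ⊆ range (n - 1)) :
    decreasingPart π = D := by
  ext x
  constructor
  · intro hx
    obtain ⟨v, -, rfl⟩ := mem_map.1 hx
    obtain ⟨u, hvu, hu⟩ := val_mem_decreasingPart.1 hx
    exact by_contra fun hv => ((h hvu).2 hv).not_gt hu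
  · intro hx
    have hxn := mem_range.1 (hD hx)
    exact val_mem_decreasingPart (v := ⟨x, by omega⟩).2
      ⟨⟨n - 1, by omega⟩, Fin.mk_lt_mk.2 hxn, (h (Fin.mk_lt_mk.2 hxn)).1 hx⟩

lemma mem_runEnds_of_bigDescent (h : UnimodalPositions π.symm D) {i j : Fin n}
    (hij : (i : ℕ) + 1 = j) (hbig : (π j : ℕ) + 1 < π i) : (π j : ℕ) ∈ runEnds (n - 1) D := by
  have hi := (π i).isLt
  have hbD : (π j : ℕ) ∈ D := by
    by_contra hb
    have := (h (show π j < π i by rw [Fin.lt_def]; omega)).2 hb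
    simp only [symm_apply_apply, Fin.lt_def] at this
    omega
  refine mem_filter.2 ⟨hbD, by omega, fun hc => ?_⟩
  -- otherwise `π j + 1` would sit strictly between the adjacent positions `i` and `j`
  set c : Fin n := ⟨π j + 1, by omega⟩
  have hac := (h (show c < π i by rw [Fin.lt_def]; simp only [c]; omega)).1 hc
  have hcb := (h (show π j < c by rw [Fin.lt_def]; simp only [c]; omega)).1 hbD
  simp only [symm_apply_apply, Fin.lt_def] at hac hcb
  omega

lemma exists_bigDescent_of_mem_runEnds (h : UnimodalPositions π.symm D) {b : ℕ}
    (hb : b ∈ runEnds (n - 1) D) :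
    ∃ i j : Fin n, (i : ℕ) + 1 = j ∧ (π j : ℕ) = b ∧ b + 1 < π i := by
  obtain ⟨hbD, hbn, hb1⟩ := mem_filter.1 hb
  set v : Fin n := ⟨b, by omega⟩
  set c : Fin n := ⟨b + 1, by omega⟩
  have hvc : v < c := Fin.mk_lt_mk.2 b.lt_succ_self
  have hct : c < ⟨n - 1, by omega⟩ := Fin.mk_lt_mk.2 hbn
  have hcv := Fin.lt_def.1 ((h hvc).1 hbD)
  have htv := Fin.lt_def.1 ((h (hvc.trans hct)).1 hbD)
  have hct' := Fin.lt_def.1 ((h hct).2 hb1)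
  set i : Fin n := ⟨π.symm v - 1, by omega⟩
  have hi : (π.symm (π i) : ℕ) = π.symm v - 1 := by simp [i]
  refine ⟨i, π.symm v, by simp only [i]; omega, by simp [v], lt_of_not_ge fun hai => ?_⟩
  -- The value `a` just left of `b` is neither below `b` (it would then lie left of `b + 1`,
  -- or right of `b`) nor `b + 1` (which lies left of `n - 1`, itself left of `b`).
  rcases lt_trichotomy (π i) v with hav | hav | hav
  · by_cases haD : (π i : ℕ) ∈ D
    · have := Fin.lt_def.1 ((h hav).1 haD)
      omega
    · have := Fin.lt_def.1 ((h (hav.trans hvc)).2 haD)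
      omega
  · rw [hav] at hi
    omega
  · have hac : π i = c := Fin.ext (by rw [Fin.lt_def] at hav; simp only [v, c] at hav ⊢; omega)
    rw [hac] at hi
    omega

lemma bdes_eq (h : UnimodalPositions π.symm D) : bdes π = #(runEnds (n - 1) D) := by
  refine card_bij (fun p hp => (π ⟨p + 1, (mem_filter.1 hp).2.fst⟩ : ℕ)) ?_ ?_ ?_
  · intro p hp
    obtain ⟨hpn, hbig⟩ := (mem_filter.1 hp).2
    exact h.mem_runEnds_of_bigDescent rfl hbig
  · intro p hp q hq hpq
    simpa using π.injective (Fin.ext hpq)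
  · intro b hb
    obtain ⟨i, j, hij, hjb, hbig⟩ := h.exists_bigDescent_of_mem_runEnds hb
    have hj : (⟨i + 1, by omega⟩ : Fin n) = j := Fin.ext hij
    exact ⟨i, mem_filter.2 ⟨mem_range.2 i.isLt, by omega, by simpa [hj, hjb] using hbig⟩,
      by simpa [hj] using hjb⟩

end UnimodalPositions

theorem card_noValley_bdes (n k : ℕ) :
    #{π : Perm (Fin n) | NoValley π ∧ bdes π = k} =
      #{D ∈ (range (n - 1)).powerset | #(runEnds (n - 1) D) = k} := by
  refine card_nbij' decreasingPart (unimodal n) (fun π hπ => ?_) (fun D hD => ?_)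
    (fun π hπ => ?_) (fun D hD => ?_)
  · obtain ⟨hπ, hk⟩ := (mem_filter.1 hπ).2
    exact mem_filter.2 ⟨mem_powerset.2 (decreasingPart_subset π),
      hπ.unimodalPositions.bdes_eq ▸ hk⟩
  · obtain ⟨hD, hk⟩ := mem_filter.1 hD
    have h := unimodalPositions_unimodal (n := n) D
    exact mem_filter.2 ⟨mem_univ _, h.noValley, h.bdes_eq.trans hk⟩
  · exact (mem_filter.1 hπ).2.1.unimodalPositions.eq_unimodal.symm
  · exact (unimodalPositions_unimodal D).decreasingPart_eq (mem_powerset.1 (mem_filter.1 hD).1)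

/-- For `n ≥ 1`, the number of permutations of length `n` avoiding both 213 and 312 with
exactly `k` big descents is `C(n, 2k+1)`. -/
theorem card_avoids213_312_bdes (n k : ℕ) (hn : 1 ≤ n) :
    Nat.card {π : Equiv.Perm (Fin n) // (Avoids π perm213 ∧ Avoids π perm312) ∧ bdes π = k} =
    Nat.choose n (2 * k + 1) := by
  rw [Nat.card_eq_fintype_card, Fintype.card_subtype]
  simp only [avoids213_312_iff_noValley]
  rw [card_noValley_bdes, card_filter_powerset_runEnds, Nat.sub_add_cancel hn]
end

section
/- For all n ≥ 0 and k ≥ 0, the four counts b_{n,k}({213,231}), b_{n,k}({132,312}), b_{n,k}({213,312}), and b_{n,k}({132,231}) are all equal. That is, the pattern sets {213,231}, {132,312}, {213,312}, and {132,231} are bdes-Wilf equivalent. -/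
open scoped Classical

/-!
Reverse-complement preserves `bdes` and maps the classes `{213,231}`, `{213,312}` onto
`{132,312}`, `{132,231}`; inversion maps `{213,231}` onto `{213,312}`. Inversion does not
preserve `bdes` in general, but it does on `{213,231}`-avoiders: there every entry is the maximum
or the minimum of its suffix, so `π i > π (i+1) + 1` holds exactly when the value `π i - 1`
sits after position `i + 1`. Hence the big descents of `π` and of `π⁻¹` correspond through
their common top entry `(i, π i)`.
-/

section

open Finset Equiv

variable {n m : ℕ}

theorem contains_iff_strictMono {π : Perm (Fin n)} {σ : Perm (Fin m)} :
    Contains π σ ↔ ∃ f : Fin m → Fin n, StrictMono f ∧ StrictMono (π ∘ f ∘ ⇑σ⁻¹) := by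
  refine exists_congr fun f => and_congr_right fun _ => ⟨fun h x y hxy => ?_, fun h a b => ?_⟩
  · simpa using (h (σ⁻¹ x) (σ⁻¹ y)).1 (by simpa using hxy)
  · simpa using (h.lt_iff_lt (a := σ a) (b := σ b)).symm

theorem Contains.inv {π : Perm (Fin n)} {σ : Perm (Fin m)} (h : Contains π σ) :
    Contains π⁻¹ σ⁻¹ := by
  obtain ⟨f, hf, hg⟩ := contains_iff_strictMono.1 h
  exact contains_iff_strictMono.2 ⟨_, hg, by convert hf; ext; simp⟩

def reverseComplement (π : Perm (Fin n)) : Perm (Fin n) :=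
  Fin.revPerm * π * Fin.revPerm

theorem reverseComplement_involutive : Function.Involutive (reverseComplement (n := n)) := by
  intro π; ext; simp [reverseComplement]

theorem Contains.reverseComplement {π : Perm (Fin n)} {σ : Perm (Fin m)} (h : Contains π σ) :
    Contains (reverseComplement π) (reverseComplement σ) := by
  obtain ⟨f, hf, hg⟩ := contains_iff_strictMono.1 h
  refine contains_iff_strictMono.2 ⟨Fin.rev ∘ f ∘ Fin.rev,
    fun a b hab => by simpa using hf (Fin.rev_lt_rev.2 hab), fun a b hab => ?_⟩
  simpa [_root_.reverseComplement, mul_inv_rev] using hg (Fin.rev_lt_rev.2 hab)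

theorem contains_213 {π : Perm (Fin n)} {i j k : Fin n} (hij : i < j) (hjk : j < k)
    (hj : π j < π i) (hk : π i < π k) : Contains π perm213 := by
  refine contains_iff_strictMono.2
    ⟨![i, j, k], Fin.strictMono_iff_lt_succ.2 ?_, Fin.strictMono_iff_lt_succ.2 ?_⟩
  · intro x; fin_cases x <;> simpa
  · intro x; fin_cases x <;> simpa [perm213]

theorem contains_231 {π : Perm (Fin n)} {i j k : Fin n} (hij : i < j) (hjk : j < k)
    (hk : π k < π i) (hj : π i < π j) : Contains π perm231 := by
  refine contains_iff_strictMono.2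
    ⟨![i, j, k], Fin.strictMono_iff_lt_succ.2 ?_, Fin.strictMono_iff_lt_succ.2 ?_⟩
  · intro x; fin_cases x <;> simpa
  · intro x; fin_cases x <;> simpa [perm231]

theorem avoids_inv_iff {π : Perm (Fin n)} {σ : Perm (Fin m)} : Avoids π⁻¹ σ ↔ Avoids π σ⁻¹ :=
  not_congr ⟨fun h => by simpa using h.inv, fun h => by simpa using h.inv⟩

theorem avoids_reverseComplement_iff {π : Perm (Fin n)} {σ : Perm (Fin m)} :
    Avoids (reverseComplement π) (reverseComplement σ) ↔ Avoids π σ :=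
  not_congr ⟨fun h => by simpa [reverseComplement_involutive _] using h.reverseComplement,
    Contains.reverseComplement⟩

theorem le_of_avoids_213_231 {π : Perm (Fin n)} (h213 : Avoids π perm213)
    (h231 : Avoids π perm231) ⦃i j k : Fin n⦄ (hij : i < j) (hik : i < k) (hj : π j < π i) :
    π k ≤ π i := by
  by_contra! hk
  rcases lt_trichotomy j k with hjk | rfl | hkj
  · exact h213 (contains_213 hij hjk hj hk)
  · exact hj.not_gt hk
  · exact h231 (contains_231 hik hkj hj hk)

def bigDescentPairs (π : Perm (Fin n)) : Finset (Fin n × Fin n) :=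
  {p | (p.2 : ℕ) = p.1 + 1 ∧ (π p.2 : ℕ) + 1 < π p.1}

theorem bdes_eq_card_bigDescentPairs (π : Perm (Fin n)) : bdes π = #(bigDescentPairs π) := by
  symm
  refine card_bij (fun p _ => (p.1 : ℕ)) ?_ ?_ ?_
  · rintro ⟨i, j⟩ hp
    simp only [bigDescentPairs, mem_filter, mem_univ, true_and] at hp
    obtain ⟨hj, hd⟩ := hp
    have hj' : j = ⟨i + 1, by omega⟩ := Fin.ext hj
    exact mem_filter.2 ⟨mem_range.2 i.2, hj ▸ j.2, hj' ▸ hd⟩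
  · rintro ⟨i, j⟩ hp ⟨i', j'⟩ hp' (h : (i : ℕ) = i')
    simp only [bigDescentPairs, mem_filter, mem_univ, true_and] at hp hp'
    ext <;> simp <;> omega
  · intro k hk
    obtain ⟨-, hk, hd⟩ := mem_filter.1 hk
    exact ⟨(⟨k, by omega⟩, ⟨k + 1, hk⟩), by simpa [bigDescentPairs] using hd, rfl⟩

theorem bdes_inv_eq_card (π : Perm (Fin n)) :
    bdes π⁻¹ = #{p : Fin n × Fin n | (π p.1 : ℕ) = π p.2 + 1 ∧ (p.1 : ℕ) + 1 < p.2} := by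
  rw [bdes_eq_card_bigDescentPairs]
  refine card_equiv ((Equiv.prodComm _ _).trans (π⁻¹.prodCongr π⁻¹)) fun p => ?_
  simp [bigDescentPairs]

theorem bdes_reverseComplement (π : Perm (Fin n)) : bdes (reverseComplement π) = bdes π := by
  simp only [bdes_eq_card_bigDescentPairs]
  refine card_equiv ((Equiv.prodComm _ _).trans (Fin.revPerm.prodCongr Fin.revPerm)) fun p => ?_
  simp [bigDescentPairs, reverseComplement, Fin.val_rev]
  omega

theorem exists_bigDescent_iff_of_avoids {π : Perm (Fin n)} (h213 : Avoids π perm213)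
    (h231 : Avoids π perm231) (i : Fin n) :
    (∃ j : Fin n, (j : ℕ) = i + 1 ∧ (π j : ℕ) + 1 < π i) ↔
      ∃ l : Fin n, (π i : ℕ) = π l + 1 ∧ (i : ℕ) + 1 < l := by
  have hle := le_of_avoids_213_231 h213 h231
  constructor
  · rintro ⟨j, hj, hji⟩
    set l := π⁻¹ ⟨π i - 1, by omega⟩
    have hl : (π l : ℕ) = π i - 1 := by simp [l]
    refine ⟨l, by omega, ?_⟩
    by_contra! hl_le
    have hli : (l : ℕ) < i := by
      have hl_ne_i : l ≠ i := fun h => by rw [h] at hl; omega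
      have hl_ne_j : l ≠ j := fun h => by rw [h] at hl; omega
      have := Fin.val_ne_of_ne hl_ne_i
      have := Fin.val_ne_of_ne hl_ne_j
      omega
    -- the suffix after `l` contains both `π j < π l` and `π i > π l`
    have := hle (i := l) (j := j) (k := i) (Fin.lt_def.2 (by omega)) (Fin.lt_def.2 hli)
      (Fin.lt_def.2 (by omega))
    rw [Fin.le_def] at this
    omega
  · rintro ⟨l, hl, hil⟩
    let j : Fin n := ⟨i + 1, by omega⟩
    have hjl : (π j : ℕ) ≠ π l := fun h => by
      have := congrArg Fin.val (π.injective (Fin.ext h)); simp [j] at this; omega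
    have hji : π j ≤ π i := hle (j := l) (Fin.lt_def.2 (by omega)) (Fin.lt_def.2 (by simp [j]))
      (Fin.lt_def.2 (by omega))
    have hji' : (π j : ℕ) ≠ π i := fun h => by
      have := congrArg Fin.val (π.injective (Fin.ext h)); simp [j] at this
    exact ⟨j, rfl, by rw [Fin.le_def] at hji; omega⟩

theorem bdes_inv_of_avoids {π : Perm (Fin n)} (h213 : Avoids π perm213)
    (h231 : Avoids π perm231) : bdes π⁻¹ = bdes π := by
  rw [bdes_inv_eq_card, bdes_eq_card_bigDescentPairs, ← card_image_of_injOn (f := Prod.fst),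
    ← card_image_of_injOn (s := bigDescentPairs π) (f := Prod.fst)]
  · congr 1
    ext i
    simpa [bigDescentPairs] using (exists_bigDescent_iff_of_avoids h213 h231 i).symm
  · rintro ⟨i, j⟩ hp ⟨i', j'⟩ hp' (h : i = i')
    simp only [bigDescentPairs, coe_filter, Set.mem_ofPred_eq] at hp hp'
    ext <;> simp <;> omega
  · rintro ⟨i, j⟩ hp ⟨i', j'⟩ hp' (h : i = i')
    simp only [coe_filter, Set.mem_ofPred_eq] at hp hp'
    subst h
    simp only [Prod.mk.injEq, true_and]
    exact π.injective (Fin.ext (by omega))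

theorem card_avoids_reverseComplement (σ τ : Perm (Fin m)) (k : ℕ) :
    Nat.card {π : Perm (Fin n) // (Avoids π σ ∧ Avoids π τ) ∧ bdes π = k} =
      Nat.card {π : Perm (Fin n) // (Avoids π (reverseComplement σ) ∧
        Avoids π (reverseComplement τ)) ∧ bdes π = k} :=
  Nat.card_congr <| reverseComplement_involutive.toPerm.subtypeEquiv fun π => by
    simp [avoids_reverseComplement_iff, bdes_reverseComplement]

theorem card_avoids_213_231_eq_card_avoids_213_312 (k : ℕ) :
    Nat.card {π : Perm (Fin n) // (Avoids π perm213 ∧ Avoids π perm231) ∧ bdes π = k} =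
      Nat.card {π : Perm (Fin n) // (Avoids π perm213 ∧ Avoids π perm312) ∧ bdes π = k} := by
  refine Nat.card_congr <| (Equiv.inv _).subtypeEquiv fun π => ?_
  rw [Equiv.inv_apply, avoids_inv_iff, avoids_inv_iff, show perm213⁻¹ = perm213 by decide,
    show perm312⁻¹ = perm231 by decide]
  exact and_congr_right fun h => by rw [bdes_inv_of_avoids h.1 h.2]

end

/-- The pattern sets `{213,231}`, `{132,312}`, `{213,312}`, and `{132,231}` are
bdes-Wilf equivalent: for all `n` and `k`, the four counts of permutations of length `n`
avoiding the pair of patterns and having exactly `k` big descents coincide. -/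
theorem bdesWilf_classes_size_two (n k : ℕ) :
    Nat.card {π : Equiv.Perm (Fin n) // (Avoids π perm213 ∧ Avoids π perm231) ∧ bdes π = k} =
      Nat.card {π : Equiv.Perm (Fin n) // (Avoids π perm132 ∧ Avoids π perm312) ∧ bdes π = k} ∧
    Nat.card {π : Equiv.Perm (Fin n) // (Avoids π perm213 ∧ Avoids π perm231) ∧ bdes π = k} =
      Nat.card {π : Equiv.Perm (Fin n) // (Avoids π perm213 ∧ Avoids π perm312) ∧ bdes π = k} ∧
    Nat.card {π : Equiv.Perm (Fin n) // (Avoids π perm213 ∧ Avoids π perm231) ∧ bdes π = k} =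
      Nat.card {π : Equiv.Perm (Fin n) // (Avoids π perm132 ∧ Avoids π perm231) ∧ bdes π = k} := by
  have h₁ := card_avoids_reverseComplement (n := n) perm213 perm231 k
  have h₂ := card_avoids_213_231_eq_card_avoids_213_312 (n := n) k
  have h₃ := card_avoids_reverseComplement (n := n) perm213 perm312 k
  simp only [show reverseComplement perm213 = perm132 by decide,
    show reverseComplement perm231 = perm312 by decide,
    show reverseComplement perm312 = perm231 by decide] at h₁ h₃
  exact ⟨h₁, h₂, h₂.trans h₃⟩
end

section
/- For all n ≥ 0 and k ≥ 0, we have b_{n,k}({123,132}) = b_{n,k}({132,213}). That is, the pattern sets {123,132} and {132,213} are bdes-Wilf equivalent. -/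
open scoped Classical


namespace BDW

/-- start of the maximal `false`-run of `s` ending just before `i`. -/
def jA (s : ℕ → Bool) : ℕ → ℕ
  | 0 => 0
  | i+1 => if s i then i+1 else jA s i

@[simp] lemma jA_zero (s : ℕ → Bool) : jA s 0 = 0 := rfl

lemma jA_succ (s : ℕ → Bool) (i : ℕ) : jA s (i+1) = if s i then i+1 else jA s i := rfl

lemma jA_true (s : ℕ → Bool) {i : ℕ} (h : s i = true) : jA s (i+1) = i+1 := by
  rw [jA_succ, h]; simp

lemma jA_false (s : ℕ → Bool) {i : ℕ} (h : s i = false) : jA s (i+1) = jA s i := by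
  rw [jA_succ, h]; simp

lemma jA_le (s : ℕ → Bool) : ∀ i, jA s i ≤ i
  | 0 => le_refl 0
  | i+1 => by
    rw [jA_succ]; split
    · exact le_refl _
    · exact (jA_le s i).trans (Nat.le_succ i)

lemma jA_mono (s : ℕ → Bool) : Monotone (jA s) := by
  apply monotone_nat_of_le_succ
  intro i
  rw [jA_succ]; split
  · exact (jA_le s i).trans (Nat.le_succ i)
  · exact le_refl _

lemma jA_gt (s : ℕ → Bool) {l m : ℕ} (h : l < m) (hl : s l = true) : l < jA s m := by
  induction m with
  | zero => omega
  | succ i ih =>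
    rcases Nat.lt_succ_iff_lt_or_eq.mp h with h' | h'
    · rw [jA_succ]; split
      · omega
      · exact ih h'
    · subst h'; rw [jA_true s hl]; omega

lemma jA_eq_succ (s : ℕ → Bool) {l m : ℕ} (h : l < m) (he : jA s m = l + 1) : s l = true := by
  induction m with
  | zero => omega
  | succ i ih =>
    by_cases hs : s i = true
    · rw [jA_true s hs] at he
      have : l = i := by omega
      subst this; exact hs
    · rw [jA_false s (by simpa using hs)] at he
      have hli : l < i := by
        have := jA_le s i; omega
      exact ih hli he

lemma jA_eq_self (s : ℕ → Bool) (i : ℕ) : jA s i = i ↔ (i = 0 ∨ s (i-1) = true) := by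
  cases i with
  | zero => simp
  | succ m =>
    constructor
    · intro h
      right
      simpa using jA_eq_succ s (Nat.lt_succ_self m) h
    · rintro (h | h)
      · omega
      · simpa using jA_true s h

lemma jA_run (s : ℕ → Bool) {l m : ℕ} (h1 : jA s m ≤ l) (h2 : l < m) : s l = false := by
  induction m with
  | zero => omega
  | succ i ih =>
    by_cases hs : s i = true
    · rw [jA_true s hs] at h1; omega
    · have hs' : s i = false := by simpa using hs
      rw [jA_false s hs'] at h1
      rcases Nat.lt_succ_iff_lt_or_eq.mp h2 with h' | h'
      · exact ih h1 h'
      · subst h'; exact hs'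

lemma jA_const (s : ℕ → Bool) {i m : ℕ} (h : i ≤ m) (hf : ∀ l, i ≤ l → l < m → s l = false) :
    jA s m = jA s i := by
  induction m with
  | zero =>
    have : i = 0 := by omega
    rw [this]
  | succ j ih =>
    rcases Nat.lt_succ_iff_lt_or_eq.mp (Nat.lt_succ_of_le h) with h' | h'
    · have hj : i ≤ j := by omega
      rw [jA_false s (hf j hj (Nat.lt_succ_self j))]
      exact ih hj fun l hl hl' => hf l hl (by omega)
    · subst h'; rfl

lemma jA_idem (s : ℕ → Bool) (m : ℕ) : jA s (jA s m) = jA s m := by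
  rcases Nat.eq_zero_or_eq_succ_pred (jA s m) with h | h
  · rw [h]; rfl
  · rw [(jA_eq_self s (jA s m)).mpr]
    right
    have hlt : jA s m - 1 < m := by have := jA_le s m; omega
    exact jA_eq_succ s hlt (by omega)


/-! ### Side A: permutations from strings, avoiding {123, 132} -/

section SideA

variable (n : ℕ) (s : ℕ → Bool)

/-- the one-line values of the permutation associated to `s`. -/
def fA (i : ℕ) : ℕ := if s i then n - 1 - jA s i else n - 2 - i

lemma fA_of_true {i : ℕ} (h : s i = true) : fA n s i = n - 1 - jA s i := by
  unfold fA; rw [h]; simp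

lemma fA_of_false {i : ℕ} (h : s i = false) : fA n s i = n - 2 - i := by
  unfold fA; rw [h]; simp

variable (hs : ∀ i, n - 1 ≤ i → s i = true)

include hs

lemma false_lt {i : ℕ} (h : s i = false) : i < n - 1 := by
  by_contra h'
  rw [hs i (by omega)] at h
  simp at h

lemma fA_lt {i : ℕ} (h : i < n) : fA n s i < n := by
  rcases Bool.eq_false_or_eq_true (s i) with h1 | h1
  · have := jA_le s i
    rw [fA_of_true n s h1]; omega
  · have := false_lt n s hs h1
    rw [fA_of_false n s h1]; omega

lemma fA_lt_iff {i i' : ℕ} (h : i < i') (h' : i' < n) :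
    fA n s i < fA n s i' ↔ (s i = false ∧ s i' = true ∧ jA s i' ≤ i) := by
  have hji := jA_le s i
  have hji' := jA_le s i'
  rcases Bool.eq_false_or_eq_true (s i) with h1 | h1 <;>
    rcases Bool.eq_false_or_eq_true (s i') with h2 | h2
  · have hmono : jA s i ≤ jA s i' := jA_mono s (le_of_lt h)
    rw [fA_of_true n s h1, fA_of_true n s h2]
    simp [h1, h2]; omega
  · have hfl' := false_lt n s hs h2
    rw [fA_of_true n s h1, fA_of_false n s h2]
    simp [h1, h2]; omega
  · have hfl := false_lt n s hs h1
    rw [fA_of_false n s h1, fA_of_true n s h2]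
    simp [h1, h2]; omega
  · have hfl := false_lt n s hs h1
    have hfl' := false_lt n s hs h2
    rw [fA_of_false n s h1, fA_of_false n s h2]
    simp [h1, h2]; omega

lemma fA_inj {i i' : ℕ} (h : i < i') (h' : i' < n) : fA n s i ≠ fA n s i' := by
  have hji := jA_le s i
  have hji' := jA_le s i'
  rcases Bool.eq_false_or_eq_true (s i) with h1 | h1 <;>
    rcases Bool.eq_false_or_eq_true (s i') with h2 | h2
  · have hgt : i < jA s i' := jA_gt s h h1
    rw [fA_of_true n s h1, fA_of_true n s h2]; omega
  · have hfl' := false_lt n s hs h2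
    rw [fA_of_true n s h1, fA_of_false n s h2]; omega
  · have hfl := false_lt n s hs h1
    rw [fA_of_false n s h1, fA_of_true n s h2]
    intro hv
    have he : jA s i' = i + 1 := by omega
    rw [jA_eq_succ s h he] at h1
    simp at h1
  · have hfl := false_lt n s hs h1
    have hfl' := false_lt n s hs h2
    rw [fA_of_false n s h1, fA_of_false n s h2]; omega

/-- big descent criterion for `fA`. -/
lemma fA_big {i : ℕ} (h : i + 1 < n) :
    fA n s (i+1) + 1 < fA n s i ↔
      (s i = true ∧ (s (i+1) = false ∨ (0 < i ∧ s (i-1) = false))) := by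
  have hji := jA_le s i
  have hji1 := jA_le s (i+1)
  rcases Bool.eq_false_or_eq_true (s i) with h1 | h1 <;>
    rcases Bool.eq_false_or_eq_true (s (i+1)) with h2 | h2
  · -- TT
    have hj1 : jA s (i+1) = i+1 := jA_true s h1
    have hself := jA_eq_self s i
    rw [fA_of_true n s h1, fA_of_true n s h2, hj1]
    simp only [h1, h2, true_and]
    constructor
    · intro hv
      have hji_lt : jA s i < i := by omega
      have hne : ¬ (i = 0 ∨ s (i-1) = true) := by
        intro hc
        rw [hself.mpr hc] at hji_lt; omega
      push_neg at hne
      exact Or.inr ⟨by omega, by simpa using hne.2⟩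
    · rintro (hc | ⟨hpos, hc⟩)
      · simp at hc
      · have hne : jA s i ≠ i := by
          intro he
          rcases hself.mp he with h' | h'
          · omega
          · rw [h'] at hc; simp at hc
        omega
  · -- TF
    have hfl' := false_lt n s hs h2
    rw [fA_of_true n s h1, fA_of_false n s h2]
    simp [h1, h2]; omega
  · -- FT
    have hfl := false_lt n s hs h1
    have hj1 : jA s (i+1) = jA s i := jA_false s h1
    rw [fA_of_false n s h1, fA_of_true n s h2, hj1]
    simp [h1]; omega
  · -- FF
    have hfl := false_lt n s hs h1
    have hfl' := false_lt n s hs h2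
    rw [fA_of_false n s h1, fA_of_false n s h2]
    simp [h1]; omega

omit hs in
/-- recovery of `s` from values of `fA`. -/
lemma fA_recover {i : ℕ} (h : i < n - 1) : fA n s i = n - 2 - i ↔ s i = false := by
  have hji := jA_le s i
  rcases Bool.eq_false_or_eq_true (s i) with h1 | h1
  · rw [fA_of_true n s h1]; simp [h1]; omega
  · rw [fA_of_false n s h1]; simp [h1]

end SideA


/-! ### Structure theorem for avoiders of {123,132} -/

section StructA

variable (n : ℕ) (p : ℕ → ℕ)
variable (hlt : ∀ i, i < n → p i < n)
variable (hinj : ∀ i i', i < n → i' < n → p i = p i' → i = i')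
variable (hsurj : ∀ v, v < n → ∃ m, m < n ∧ p m = v)
variable (htriple : ∀ i j k, i < j → j < k → k < n → p i < p j → p i < p k → False)

/-- recovered string: `true` iff `p i` is a suffix maximum (padded with `true`). -/
noncomputable def sR : ℕ → Bool := fun i =>
  decide (n - 1 ≤ i) || decide (∀ m, i < m → m < n → p m < p i)

lemma sR_pad : ∀ i, n - 1 ≤ i → sR n p i = true := by
  intro i hi; unfold sR; simp [hi]

lemma sR_true_suffix {i : ℕ} (h : sR n p i = true) (h' : i < n - 1) :
    ∀ m, i < m → m < n → p m < p i := by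
  unfold sR at h
  rcases Bool.or_eq_true_iff.mp h with h | h
  · exfalso; have := of_decide_eq_true h; omega
  · exact of_decide_eq_true h

include hinj in
lemma sR_false_ex {i : ℕ} (h : sR n p i = false) :
    i < n - 1 ∧ ∃ m, i < m ∧ m < n ∧ p i < p m := by
  unfold sR at h
  rcases Bool.or_eq_false_iff.mp h with ⟨h1, h2⟩
  have h1' : i < n - 1 := by have := of_decide_eq_false h1; omega
  have h2' := of_decide_eq_false h2
  push_neg at h2'
  obtain ⟨m, hm1, hm2, hm3⟩ := h2'
  refine ⟨h1', m, hm1, hm2, ?_⟩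
  rcases lt_or_eq_of_le hm3 with h | h
  · exact h
  · exact absurd (hinj i m (by omega) hm2 h) (by omega)

end StructA


section StructA2

variable (n : ℕ) (p : ℕ → ℕ)
variable (hlt : ∀ i, i < n → p i < n)
variable (hinj : ∀ i i', i < n → i' < n → p i = p i' → i = i')
variable (hsurj : ∀ v, v < n → ∃ m, m < n ∧ p m = v)
variable (htriple : ∀ i j k, i < j → j < k → k < n → p i < p j → p i < p k → False)

/-- the invariant: description of the set of values in positions `≥ i`. -/
def RA (i : ℕ) : Prop :=
  ∀ v, v < n → ((∃ m, i ≤ m ∧ m < n ∧ p m = v) ↔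
    (v + i + 1 < n ∨ v = n - 1 - jA (sR n p) i))

include hsurj in
lemma RA_zero : RA n p 0 := by
  intro v hv
  have h0 : jA (sR n p) 0 = 0 := rfl
  rw [h0]
  constructor
  · intro; omega
  · intro
    obtain ⟨m, hm, hpm⟩ := hsurj v hv
    exact ⟨m, Nat.zero_le m, hm, hpm⟩

include hlt hinj htriple in
lemma RA_step {i : ℕ} (hi : i < n) (hRA : RA n p i) : p i = fA n (sR n p) i := by
  set s := sR n p with hs_def
  have hj_le : jA s i ≤ i := jA_le s i
  have hM : ∃ m, i ≤ m ∧ m < n ∧ p m = n - 1 - jA s i :=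
    (hRA (n - 1 - jA s i) (by omega)).mpr (Or.inr rfl)
  obtain ⟨m, him, hmn, hpm⟩ := hM
  have hpi : p i + i + 1 < n ∨ p i = n - 1 - jA s i :=
    (hRA (p i) (hlt i hi)).mp ⟨i, le_refl i, hi, rfl⟩
  rcases Bool.eq_false_or_eq_true (s i) with h1 | h1
  · -- suffix max
    rw [fA_of_true n s h1]
    rcases hpi with hsmall | heq
    · exfalso
      have hmne : p m ≠ p i := by omega
      have hmi : i < m := by
        rcases lt_or_eq_of_le him with h | h
        · exact h
        · exfalso; rw [← h] at hpm; omega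
      have hfl : i < n - 1 := by omega
      have := sR_true_suffix n p h1 hfl m hmi hmn
      omega
    · exact heq
  · -- not suffix max
    rw [fA_of_false n s h1]
    obtain ⟨hfl, m0, hm0i, hm0n, hm0gt⟩ := sR_false_ex n p hinj h1
    rcases hpi with hsmall | heq
    · by_contra hne
      have hlt2 : p i < n - 2 - i := by omega
      obtain ⟨m1, him1, hm1n, hpm1⟩ :=
        (hRA (n - 2 - i) (by omega)).mpr (Or.inl (by omega))
      have hm1i : i < m1 := by
        rcases lt_or_eq_of_le him1 with h | h
        · exact h
        · exfalso; rw [← h] at hpm1; omega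
      have hm2i : i < m := by
        rcases lt_or_eq_of_le him with h | h
        · exact h
        · exfalso; rw [← h] at hpm; omega
      have hne12 : m1 ≠ m := by
        intro hh; rw [hh, hpm] at hpm1; omega
      rcases lt_or_gt_of_ne hne12 with hlt12 | hlt12
      · exact htriple i m1 m hm1i hlt12 hmn (by omega) (by omega)
      · exact htriple i m m1 hm2i hlt12 hm1n (by omega) (by omega)
    · exfalso
      have hpm0 : p m0 + i + 1 < n ∨ p m0 = n - 1 - jA s i :=
        (hRA (p m0) (hlt m0 hm0n)).mp ⟨m0, by omega, hm0n, rfl⟩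
      rcases hpm0 with hh | hh
      · omega
      · rw [← heq] at hh
        exact absurd (hinj m0 i hm0n hi hh) (by omega)

include hinj in
lemma RA_succ {i : ℕ} (hi : i + 1 < n) (hRA : RA n p i)
    (hp : p i = fA n (sR n p) i) : RA n p (i+1) := by
  have hpad : ∀ l, n - 1 ≤ l → sR n p l = true := sR_pad n p
  have hj_le : jA (sR n p) i ≤ i := jA_le (sR n p) i
  intro v hv
  have base := hRA v hv
  have lem : (∃ m, i + 1 ≤ m ∧ m < n ∧ p m = v) ↔
      ((∃ m, i ≤ m ∧ m < n ∧ p m = v) ∧ v ≠ p i) := by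
    constructor
    · rintro ⟨m, hm1, hm2, hm3⟩
      refine ⟨⟨m, by omega, hm2, hm3⟩, ?_⟩
      intro hveq
      have : m = i := hinj m i hm2 (by omega) (by rw [hm3, hveq])
      omega
    · rintro ⟨⟨m, hm1, hm2, hm3⟩, hne⟩
      refine ⟨m, ?_, hm2, hm3⟩
      rcases lt_or_eq_of_le hm1 with h | h
      · omega
      · exfalso; rw [← h] at hm3; exact hne hm3.symm
  rcases Bool.eq_false_or_eq_true (sR n p i) with h1 | h1
  · rw [fA_of_true n (sR n p) h1] at hp
    rw [lem, base, jA_true (sR n p) h1, hp]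
    clear lem base hRA hpad
    omega
  · rw [fA_of_false n (sR n p) h1] at hp
    have hfl : i < n - 1 := false_lt n (sR n p) hpad h1
    rw [lem, base, jA_false (sR n p) h1, hp]
    clear lem base hRA hpad
    omega

include hlt hinj hsurj htriple in
lemma structA : ∀ i, i < n → p i = fA n (sR n p) i := by
  have hRA : ∀ i, i < n → RA n p i := by
    intro i
    induction i with
    | zero => intro _; exact RA_zero n p hsurj
    | succ m ih =>
      intro hm
      exact RA_succ n p hinj hm (ih (by omega))
        (RA_step n p hlt hinj htriple (by omega) (ih (by omega)))
  intro i hi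
  exact RA_step n p hlt hinj htriple hi (hRA i hi)

end StructA2


/-! ### Side B: permutations from strings, avoiding {132, 213} -/

section SideB

variable (n : ℕ) (t : ℕ → Bool)

/-- start of the block containing `i`. -/
def sB : ℕ → ℕ := jA (fun l => !t l)

/-- length of the `true`-run of (padded) `t` starting at `i`. -/
lemma qB_ex (i : ℕ) : ∃ d, (decide (i + d < n - 1) && t (i + d)) = false :=
  ⟨n - 1, by
    have h0 : ¬ (i + (n-1) < n - 1) := by omega
    simp only [decide_eq_false h0, Bool.false_and]⟩

def qB (i : ℕ) : ℕ := Nat.find (qB_ex n t i)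

/-- (exclusive) end of the block containing `i`. -/
def eB (i : ℕ) : ℕ := i + qB n t i + 1

/-- the one-line values of the permutation associated to `t`. -/
def fB (i : ℕ) : ℕ := n - eB n t i + (i - sB t i)

lemma sB_le (i : ℕ) : sB t i ≤ i := jA_le _ i

lemma sB_run {l i : ℕ} (h1 : sB t i ≤ l) (h2 : l < i) : t l = true := by
  have := jA_run (fun l => !t l) h1 h2
  simpa using this

lemma sB_boundary {i : ℕ} (h : 0 < sB t i) : t (sB t i - 1) = false := by
  have hle : sB t i ≤ i := sB_le t i
  have := jA_eq_succ (fun l => !t l) (show sB t i - 1 < i by omega)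
    (show jA (fun l => !t l) i = (sB t i - 1) + 1 by
      show sB t i = _; omega)
  simpa using this

lemma sB_true {i : ℕ} (h : t i = true) : sB t (i+1) = sB t i :=
  jA_false _ (by simp [h])

lemma sB_false {i : ℕ} (h : t i = false) : sB t (i+1) = i + 1 :=
  jA_true _ (by simp [h])

lemma sB_eq_self (i : ℕ) : sB t i = i ↔ (i = 0 ∨ t (i-1) = false) := by
  rw [show sB t i = jA (fun l => !t l) i from rfl, jA_eq_self]
  simp

variable (ht : ∀ i, n - 1 ≤ i → t i = false)

include ht

lemma qB_spec (i : ℕ) : t (i + qB n t i) = false := by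
  by_cases hc : i + qB n t i < n - 1
  · have h : (decide (i + qB n t i < n - 1) && t (i + qB n t i)) = false :=
      Nat.find_spec (qB_ex n t i)
    simpa [hc] using h
  · exact ht _ (by omega)

omit ht in
lemma qB_le {i d : ℕ} (h : t (i + d) = false) : qB n t i ≤ d :=
  Nat.find_le (by simp [h])

omit ht in
lemma qB_min {i d : ℕ} (h : d < qB n t i) : t (i + d) = true ∧ i + d < n - 1 := by
  have := Nat.find_min (qB_ex n t i) h
  constructor
  · by_contra hc
    exact this (by simp [Bool.eq_false_iff.mpr hc])
  · by_contra hc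
    exact this (by simp; omega)

lemma qB_eq_zero (i : ℕ) : qB n t i = 0 ↔ t i = false := by
  constructor
  · intro h
    have := qB_spec n t ht i
    rwa [h, Nat.add_zero] at this
  · intro h
    have : qB n t i ≤ 0 := qB_le n t (d := 0) (by simpa using h)
    omega

lemma qB_shift {i : ℕ} (h : t i = true) : qB n t i = qB n t (i+1) + 1 := by
  have h1 : qB n t i ≤ qB n t (i+1) + 1 := by
    apply qB_le n t
    have := qB_spec n t ht (i+1)
    rwa [show i + 1 + qB n t (i+1) = i + (qB n t (i+1) + 1) from by omega] at this
  have h2 : ¬ qB n t i = 0 := by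
    rw [qB_eq_zero n t ht]
    simp [h]
  by_contra hc
  have hlt : qB n t i < qB n t (i+1) + 1 := by omega
  have hd : qB n t i - 1 < qB n t (i+1) := by omega
  have := (qB_min n t hd).1
  have hspec := qB_spec n t ht i
  rw [show i + 1 + (qB n t i - 1) = i + qB n t i by omega] at this
  rw [this] at hspec
  simp at hspec

lemma eB_shift {i : ℕ} (h : t i = true) : eB n t (i+1) = eB n t i := by
  unfold eB
  rw [qB_shift n t ht h]
  omega

omit ht in
lemma eB_false {i : ℕ} (h : t i = false) : eB n t i = i + 1 := by
  unfold eB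
  have : qB n t i ≤ 0 := qB_le n t (d := 0) (by simpa using h)
  omega

lemma eB_le {i : ℕ} (h : i < n) : eB n t i ≤ n := by
  unfold eB
  have : qB n t i ≤ n - 1 - i := qB_le n t (by rw [show i + (n-1-i) = n-1 by omega]; exact ht _ (le_refl _))
  omega

omit ht in
lemma eB_gt (i : ℕ) : i < eB n t i := by unfold eB; omega

lemma eB_run : ∀ d, (∀ l, i ≤ l → l < i + d → t l = true) → eB n t (i + d) = eB n t i := by
  intro d
  induction d with
  | zero => intro _; rfl
  | succ e ihe =>
    intro hrun
    rw [show i + (e+1) = (i+e) + 1 by omega, eB_shift n t ht (hrun (i+e) (by omega) (by omega))]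
    exact ihe fun l hl hl' => hrun l hl (by omega)

lemma eB_sB (i : ℕ) : eB n t i = eB n t (sB t i) := by
  have hle := sB_le t i
  have h := eB_run n t ht (i := sB t i) (i - sB t i)
    (fun l hl hl' => sB_run t hl (by omega))
  rwa [show sB t i + (i - sB t i) = i from by omega] at h

lemma sameBlock {i i' : ℕ} (h : i < i') (h2 : sB t i' ≤ i) :
    sB t i' = sB t i ∧ eB n t i' = eB n t i := by
  constructor
  · exact jA_const (fun l => !t l) (le_of_lt h)
      fun l hl hl' => by simp [sB_run t (le_trans h2 hl) hl']
  · rw [show i' = i + (i' - i) by omega]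
    exact eB_run n t ht (i := i) (i' - i)
      fun l hl hl' => sB_run t (le_trans h2 hl) (by omega)

omit ht in
lemma crossBlock {i i' : ℕ} (h : i < sB t i') : eB n t i ≤ sB t i' := by
  have hb := sB_boundary t (show 0 < sB t i' by omega)
  have : qB n t i ≤ sB t i' - 1 - i := qB_le n t
    (by rw [show i + (sB t i' - 1 - i) = sB t i' - 1 by omega]; exact hb)
  unfold eB
  omega

lemma fB_lt {i : ℕ} (h : i < n) : fB n t i < n := by
  have h1 := sB_le t i
  have h2 := eB_le n t ht h
  have h3 := eB_gt n t i
  unfold fB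
  omega

lemma fB_succ {i : ℕ} (h : t i = true) : fB n t (i+1) = fB n t i + 1 := by
  have h1 := sB_le t i
  unfold fB
  rw [sB_true t h, eB_shift n t ht h]
  omega

lemma fB_cross {i i' : ℕ} (h : i < i') (h' : i' < n) (hb : eB n t i ≤ sB t i') :
    fB n t i' < fB n t i := by
  have h1 := sB_le t i
  have h2 := sB_le t i'
  have h3 := eB_gt n t i
  have h4 := eB_gt n t i'
  have h5 := eB_le n t ht h'
  unfold fB
  omega

lemma fB_inj {i i' : ℕ} (h : i < i') (h' : i' < n) : fB n t i ≠ fB n t i' := by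
  by_cases hc : sB t i' ≤ i
  · obtain ⟨hsb, heb⟩ := sameBlock n t ht h hc
    have h1 := sB_le t i
    have h3 := eB_gt n t i'
    have h5 := eB_le n t ht h'
    unfold fB
    rw [hsb, heb]
    omega
  · exact (fB_cross n t ht h h' (crossBlock n t (by omega))).ne'

end SideB


section SideB2

variable (n : ℕ) (t : ℕ → Bool)
variable (ht : ∀ i, n - 1 ≤ i → t i = false)

include ht

/-- big descent criterion for `fB`. -/
lemma fB_big {i : ℕ} (h : i + 1 < n) :
    fB n t (i+1) + 1 < fB n t i ↔
      (t i = false ∧ (t (i+1) = true ∨ (0 < i ∧ t (i-1) = true))) := by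
  rcases Bool.eq_false_or_eq_true (t i) with h1 | h1
  · -- t i = true : ascent
    rw [fB_succ n t ht h1]
    simp [h1]
    omega
  · -- t i = false
    have e1 : eB n t i = i + 1 := eB_false n t h1
    have e2 : sB t (i+1) = i + 1 := sB_false t h1
    have e3 : eB n t (i+1) = i + 1 + qB n t (i+1) + 1 := rfl
    have hsle := sB_le t i
    have hq0 := qB_eq_zero n t ht (i+1)
    have hs0 := sB_eq_self t i
    have heb1 : eB n t (i+1) ≤ n := eB_le n t ht h
    simp only [h1, true_and]
    unfold fB
    rw [e1, e2, e3] at *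
    rcases Bool.eq_false_or_eq_true (t (i+1)) with h2 | h2
    · -- next glued: always big
      have hq : qB n t (i+1) ≠ 0 := by
        intro hc
        rw [hq0] at hc
        rw [hc] at h2
        simp at h2
      simp only [h2, true_or, iff_true]
      omega
    · -- next is a new (singleton-start) block
      have hq : qB n t (i+1) = 0 := by rw [hq0, h2]
      simp only [h2, Bool.false_eq_true, false_or]
      constructor
      · intro hbig
        have hslt : sB t i < i := by omega
        have hne : ¬ (i = 0 ∨ t (i-1) = false) := by
          intro hc
          have := hs0.mpr hc
          omega
        push_neg at hne
        refine ⟨by omega, ?_⟩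
        rcases Bool.eq_false_or_eq_true (t (i-1)) with h3 | h3
        · exact h3
        · exact absurd h3 hne.2

      · rintro ⟨hpos, h3⟩
        have hne : sB t i ≠ i := by
          intro hc
          rcases hs0.mp hc with hc' | hc'
          · omega
          · rw [hc'] at h3; simp at h3
        omega

/-- The fundamental dichotomy for `fB`. -/
lemma Qfb : ∀ m, m < n → ∀ i, i < m →
    (fB n t m = fB n t i + (m - i) ∨ fB n t m < fB n t i) := by
  intro m
  induction m with
  | zero => omega
  | succ m' ih =>
    intro hm i hi
    rcases Bool.eq_false_or_eq_true (t m') with h1 | h1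
    · -- glued to previous
      have hsucc := fB_succ n t ht h1
      rcases Nat.lt_succ_iff_lt_or_eq.mp hi with hi' | hi'
      · rcases ih (by omega) i hi' with hc | hc
        · left; omega
        · right
          have hne := fB_inj n t ht hi hm
          omega
      · subst hi'; left; omega
    · -- new block
      right
      have hs : sB t (m'+1) = m' + 1 := sB_false t h1
      have hcb : eB n t i ≤ sB t (m'+1) := crossBlock n t (by omega)
      exact fB_cross n t ht (show i < m' + 1 by omega) (show m' + 1 < n by omega) hcb

/-- fB has no 132 pattern. -/
lemma fB_no132 {i j l : ℕ} (h1 : i < j) (h2 : j < l) (h3 : l < n)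
    (hv1 : fB n t i < fB n t l) (hv2 : fB n t l < fB n t j) : False := by
  rcases Qfb n t ht j (by omega) i h1 with hc | hc
  · rcases Qfb n t ht l h3 i (by omega) with hd | hd
    · omega
    · omega
  · omega

/-- fB has no 213 pattern. -/
lemma fB_no213 {i j l : ℕ} (h1 : i < j) (h2 : j < l) (h3 : l < n)
    (hv1 : fB n t j < fB n t i) (hv2 : fB n t i < fB n t l) : False := by
  rcases Qfb n t ht l h3 i (by omega) with hc | hc
  · rcases Qfb n t ht l h3 j h2 with hd | hd
    · omega
    · omega
  · omega

/-- recovery of `t` from values of `fB`. -/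
lemma fB_recover {i : ℕ} (h : i + 1 < n) :
    fB n t (i+1) = fB n t i + 1 ↔ t i = true := by
  rcases Bool.eq_false_or_eq_true (t i) with h1 | h1
  · simp [h1, fB_succ n t ht h1]
  · have hs : sB t (i+1) = i + 1 := sB_false t h1
    have hcb : eB n t i ≤ sB t (i+1) := crossBlock n t (by omega)
    have := fB_cross n t ht (show i < i + 1 by omega) h hcb
    simp [h1]
    omega

end SideB2


/-! ### Structure theorem for avoiders of {132,213} -/

section StructB

variable (n : ℕ) (p : ℕ → ℕ)
variable (hlt : ∀ i, i < n → p i < n)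
variable (hinj : ∀ i i', i < n → i' < n → p i = p i' → i = i')
variable (hsurj : ∀ v, v < n → ∃ m, m < n ∧ p m = v)
variable (hno132 : ∀ i j l, i < j → j < l → l < n → p i < p l → p l < p j → False)
variable (hno213 : ∀ i j l, i < j → j < l → l < n → p j < p i → p i < p l → False)

/-- recovered glue string. -/
noncomputable def tR : ℕ → Bool := fun i => decide (i + 1 < n ∧ p (i+1) = p i + 1)

lemma tR_pad : ∀ i, n - 1 ≤ i → tR n p i = false := by
  intro i hi
  unfold tR
  have : ¬ (i + 1 < n ∧ p (i+1) = p i + 1) := by rintro ⟨h, -⟩; omega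
  exact decide_eq_false this

lemma tR_true {i : ℕ} (h : tR n p i = true) : p (i+1) = p i + 1 :=
  (of_decide_eq_true h).2

include hlt hinj hsurj hno132 hno213 in
lemma Llem {i : ℕ} (h : i + 1 < n) :
    tR n p i = true ∨ ∀ m, m ≤ i → p (i+1) < p m := by
  have hne : p i ≠ p (i+1) := fun hc => by
    have := hinj i (i+1) (by omega) h hc; omega
  rcases lt_or_gt_of_ne hne with hgt | hgt
  · -- ascent: must be glued
    left
    have hval : p (i+1) = p i + 1 := by
      by_contra hc
      have hv : p i + 1 < p (i+1) := by omega
      obtain ⟨m, hm, hpm⟩ := hsurj (p i + 1) (by have := hlt (i+1) h; omega)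
      have hmne1 : m ≠ i := fun hc' => by rw [hc'] at hpm; omega
      have hmne2 : m ≠ i + 1 := fun hc' => by rw [hc'] at hpm; omega
      rcases lt_trichotomy m i with hh | hh | hh
      · exact hno213 m i (i+1) hh (by omega) h (by omega) (by omega)
      · exact hmne1 hh
      · exact hno132 i (i+1) m (by omega) (by omega) hm (by omega) (by omega)
    unfold tR
    exact decide_eq_true ⟨h, hval⟩
  · -- descent: new minimum
    right
    intro m hm
    rcases lt_or_eq_of_le hm with hmi | hmi
    · by_contra hc
      have hle : p m ≤ p (i+1) := by omega
      have hne2 : p m ≠ p (i+1) := fun hc' => by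
        have := hinj m (i+1) (by omega) h hc'; omega
      exact hno132 m i (i+1) hmi (by omega) h (by omega) (by omega)
    · rw [hmi]; omega

include hlt hinj hsurj hno132 hno213 in
lemma Qp : ∀ m, m < n → ∀ i, i < m → (p m = p i + (m - i) ∨ p m < p i) := by
  intro m
  induction m with
  | zero => omega
  | succ m' ih =>
    intro hm i hi
    rcases Llem n p hlt hinj hsurj hno132 hno213 (show m' + 1 < n from hm) with hg | hg
    · have hsucc : p (m'+1) = p m' + 1 := tR_true n p hg
      rcases Nat.lt_succ_iff_lt_or_eq.mp hi with hi' | hi'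
      · rcases ih (by omega) i hi' with hc | hc
        · left; omega
        · right
          have hne : p (m'+1) ≠ p i := fun hc' => by
            have := hinj (m'+1) i hm (by omega) hc'; omega
          omega
      · subst hi'; left; omega
    · right
      exact hg i (by omega)

include hlt hinj hsurj hno132 hno213 in
lemma below_after_break {e1 : ℕ} (he : tR n p e1 = false) :
    ∀ m, e1 < m → m < n → ∀ a, a ≤ e1 → p m < p a := by
  have hbase : ∀ a, a ≤ e1 → (e1 + 1 < n) → p (e1+1) < p a := by
    intro a ha hn
    rcases Llem n p hlt hinj hsurj hno132 hno213 hn with hg | hg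
    · rw [hg] at he; simp at he
    · exact hg a ha
  intro m hm hmn a ha
  rcases Nat.lt_iff_add_one_le.mp hm |> lt_or_eq_of_le with hm' | hm'
  · -- m > e1 + 1
    have hb := hbase a ha (by omega)
    rcases Qp n p hlt hinj hsurj hno132 hno213 m hmn a (by omega) with hc | hc
    · rcases Qp n p hlt hinj hsurj hno132 hno213 m hmn (e1+1) (by omega) with hd | hd
      · omega
      · omega
    · exact hc
  · rw [← hm']
    exact hbase a ha (by omega)

/-- the invariant: positions `< i` hold exactly the values `≥ n - i`, for `i` a block start. -/
def KB (i : ℕ) : Prop := ∀ v, v < n → ((∃ m, m < i ∧ p m = v) ↔ n - i ≤ v)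

include hlt hinj hsurj hno132 hno213 in
lemma blockStep {a : ℕ} (ha : a < n) (hK : KB n p a) :
    p a = n - eB n (tR n p) a ∧ KB n p (eB n (tR n p) a) := by
  have htpad := tR_pad n p
  set q := qB n (tR n p) a with hq_def
  have hbreak : tR n p (a + q) = false := qB_spec n (tR n p) htpad a
  have he_le : a + q + 1 ≤ n := by
    have := eB_le n (tR n p) htpad ha
    unfold eB at this
    omega
  have hchain : ∀ d, d ≤ q → p (a + d) = p a + d := by
    intro d
    induction d with
    | zero => intro _; simp
    | succ e ihe =>
      intro hd
      have hmin := (qB_min n (tR n p) (show e < q by omega)).1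
      have := tR_true n p hmin
      rw [show a + (e+1) = (a + e) + 1 by omega, this, ihe (by omega)]
      omega
  have hsmall : ∀ m, a + q + 1 ≤ m → m < n → p m < p a :=
    fun m hm hmn => below_after_break n p hlt hinj hsurj hno132 hno213 hbreak m
      (by omega) hmn a (by omega)
  have hub : p a + q ≤ n - a - 1 := by
    have hv := hlt (a + q) (by omega)
    by_contra hc
    have hge : n - a ≤ p (a + q) := by
      rw [hchain q (le_refl q)]; omega
    obtain ⟨m, hm, hpm⟩ := (hK (p (a+q)) (by omega)).mpr hge
    have := hinj m (a + q) (by omega) (by omega) hpm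
    omega
  have hlb : n - a - 1 ≤ p a + q := by
    by_contra hc
    have hvn : p a + q + 1 < n - a := by omega
    obtain ⟨m, hmn, hpm⟩ := hsurj (p a + q + 1) (by omega)
    rcases lt_trichotomy m a with hh | hh | hh
    · have : n - a ≤ p a + q + 1 := (hK (p a + q + 1) (by omega)).mp ⟨m, hh, hpm⟩
      omega
    · rw [hh] at hpm
      have := hchain 0 (by omega)
      simp at this
      omega
    · by_cases hcc : m ≤ a + q
      · have := hchain (m - a) (by omega)
        rw [show a + (m - a) = m by omega] at this
        omega
      · have := hsmall m (by omega) hmn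
        omega
  have hpa : p a = n - (a + q + 1) := by omega
  have heB : eB n (tR n p) a = a + q + 1 := by rw [hq_def]; rfl
  refine ⟨by omega, ?_⟩
  intro v hv
  constructor
  · rintro ⟨m, hm, hpm⟩
    by_cases hcc : m < a
    · have := (hK v hv).mp ⟨m, hcc, hpm⟩
      omega
    · have := hchain (m - a) (by omega)
      rw [show a + (m - a) = m by omega] at this
      omega
  · intro hge
    by_cases hcc : n - a ≤ v
    · obtain ⟨m, hm, hpm⟩ := (hK v hv).mpr hcc
      exact ⟨m, by omega, hpm⟩
    · refine ⟨a + (v - (n - (a + q + 1))), by omega, ?_⟩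
      rw [hchain (v - (n - (a + q + 1))) (by omega)]
      omega

include hlt hinj hsurj hno132 hno213 in
lemma KB_all : ∀ i, i < n → sB (tR n p) i = i → KB n p i := by
  intro i
  induction i using Nat.strong_induction_on with
  | _ i ih =>
    rcases Nat.eq_zero_or_pos i with h0 | h0
    · subst h0
      intro _ _ v hv
      constructor
      · rintro ⟨m, hm, -⟩; omega
      · intro h; omega
    · intro hi hsi
      set a := sB (tR n p) (i-1) with ha_def
      have hale : a ≤ i - 1 := sB_le (tR n p) (i-1)
      have hsaa : sB (tR n p) a = a := jA_idem _ (i-1)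
      have hKa : KB n p a := ih a (by omega) (by omega) hsaa
      have hbound : tR n p (i-1) = false := by
        rcases (sB_eq_self (tR n p) i).mp hsi with hc | hc
        · omega
        · exact hc
      have hrun : ∀ l, a ≤ l → l < i - 1 → tR n p l = true :=
        fun l hl hl' => sB_run (tR n p) (ha_def ▸ hl) hl'
      have hqa : qB n (tR n p) a = i - 1 - a := by
        have h1 : qB n (tR n p) a ≤ i - 1 - a := qB_le n (tR n p)
          (by rw [show a + (i - 1 - a) = i - 1 by omega]; exact hbound)
        by_contra hc
        have h2 : qB n (tR n p) a < i - 1 - a := by omega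
        have := qB_spec n (tR n p) (tR_pad n p) a
        rw [hrun (a + qB n (tR n p) a) (by omega) (by omega)] at this
        simp at this
      have heqi : eB n (tR n p) a = i := by
        unfold eB; omega
      have := (blockStep n p hlt hinj hsurj hno132 hno213 (by omega) hKa).2
      rwa [heqi] at this

include hlt hinj hsurj hno132 hno213 in
lemma structB : ∀ i, i < n → p i = fB n (tR n p) i := by
  intro i hi
  set a := sB (tR n p) i with ha_def
  have hale : a ≤ i := sB_le (tR n p) i
  have hsaa : sB (tR n p) a = a := jA_idem _ i
  have hKa : KB n p a := KB_all n p hlt hinj hsurj hno132 hno213 a (by omega) hsaa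
  have hpa : p a = n - eB n (tR n p) a :=
    (blockStep n p hlt hinj hsurj hno132 hno213 (by omega) hKa).1
  have heBeq : eB n (tR n p) i = eB n (tR n p) a := eB_sB n (tR n p) (tR_pad n p) i
  have hchain : ∀ d, d ≤ qB n (tR n p) a → p (a + d) = p a + d := by
    intro d
    induction d with
    | zero => intro _; simp
    | succ e ihe =>
      intro hd
      have hmin := (qB_min n (tR n p) (show e < qB n (tR n p) a by omega)).1
      have := tR_true n p hmin
      rw [show a + (e+1) = (a + e) + 1 by omega, this, ihe (by omega)]
      omega
  have hile : i - a ≤ qB n (tR n p) a := by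
    have h1 : i < eB n (tR n p) i := eB_gt n (tR n p) i
    rw [heBeq] at h1
    unfold eB at h1
    omega
  have hpi : p i = p a + (i - a) := by
    have := hchain (i - a) hile
    rwa [show a + (i - a) = i by omega] at this
  have heble : eB n (tR n p) a ≤ n := eB_le n (tR n p) (tR_pad n p) (by omega)
  have hegt : a < eB n (tR n p) a := eB_gt n (tR n p) a
  unfold fB
  rw [← ha_def, heBeq]
  omega

end StructB


/-! ### Fin-level infrastructure -/

section PermLevel

variable {n : ℕ}

/-- ℕ-level version of a permutation of `Fin n`. -/
def pN (π : Equiv.Perm (Fin n)) (i : ℕ) : ℕ :=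
  if h : i < n then ((π ⟨i, h⟩ : Fin n) : ℕ) else 0

lemma pN_val (π : Equiv.Perm (Fin n)) {i : ℕ} (h : i < n) :
    pN π i = ((π ⟨i, h⟩ : Fin n) : ℕ) := dif_pos h

lemma pN_lt (π : Equiv.Perm (Fin n)) {i : ℕ} (h : i < n) : pN π i < n := by
  rw [pN_val π h]; exact (π ⟨i, h⟩).isLt

lemma pN_inj (π : Equiv.Perm (Fin n)) {i i' : ℕ} (h : i < n) (h' : i' < n)
    (he : pN π i = pN π i') : i = i' := by
  rw [pN_val π h, pN_val π h'] at he
  have := π.injective (Fin.ext he)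
  simpa using congrArg Fin.val this

lemma pN_surj (π : Equiv.Perm (Fin n)) {v : ℕ} (h : v < n) : ∃ m, m < n ∧ pN π m = v := by
  obtain ⟨m, hm⟩ := π.surjective ⟨v, h⟩
  exact ⟨m.val, m.isLt, by rw [pN_val π m.isLt]; simp [Fin.eta, hm]⟩

/-- pattern-producing constructions -/
lemma strictMono_triple {i j l : Fin n} (h1 : i < j) (h2 : j < l) :
    StrictMono ![i, j, l] := by
  intro a b hab
  fin_cases a <;> fin_cases b <;>
    first
      | exact absurd hab (by decide)
      | simpa using h1
      | simpa using h2
      | simpa using h1.trans h2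

lemma contains123_of (π : Equiv.Perm (Fin n)) {i j l : Fin n} (h1 : i < j) (h2 : j < l)
    (hv1 : π i < π j) (hv2 : π j < π l) : Contains π perm123 := by
  refine ⟨![i, j, l], strictMono_triple h1 h2, ?_⟩
  intro a b
  fin_cases a <;> fin_cases b <;>
    first
      | exact iff_of_true (by decide) hv1
      | exact iff_of_true (by decide) hv2
      | exact iff_of_true (by decide) (hv1.trans hv2)
      | exact iff_of_false (by decide) (lt_irrefl _)
      | exact iff_of_false (by decide) (asymm hv1)
      | exact iff_of_false (by decide) (asymm hv2)
      | exact iff_of_false (by decide) (asymm (hv1.trans hv2))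

lemma contains132_of (π : Equiv.Perm (Fin n)) {i j l : Fin n} (h1 : i < j) (h2 : j < l)
    (hv1 : π i < π l) (hv2 : π l < π j) : Contains π perm132 := by
  refine ⟨![i, j, l], strictMono_triple h1 h2, ?_⟩
  intro a b
  fin_cases a <;> fin_cases b <;>
    first
      | exact iff_of_true (by decide) hv1
      | exact iff_of_true (by decide) hv2
      | exact iff_of_true (by decide) (hv1.trans hv2)
      | exact iff_of_false (by decide) (lt_irrefl _)
      | exact iff_of_false (by decide) (asymm hv1)
      | exact iff_of_false (by decide) (asymm hv2)
      | exact iff_of_false (by decide) (asymm (hv1.trans hv2))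

lemma contains213_of (π : Equiv.Perm (Fin n)) {i j l : Fin n} (h1 : i < j) (h2 : j < l)
    (hv1 : π j < π i) (hv2 : π i < π l) : Contains π perm213 := by
  refine ⟨![i, j, l], strictMono_triple h1 h2, ?_⟩
  intro a b
  fin_cases a <;> fin_cases b <;>
    first
      | exact iff_of_true (by decide) hv1
      | exact iff_of_true (by decide) hv2
      | exact iff_of_true (by decide) (hv1.trans hv2)
      | exact iff_of_false (by decide) (lt_irrefl _)
      | exact iff_of_false (by decide) (asymm hv1)
      | exact iff_of_false (by decide) (asymm hv2)
      | exact iff_of_false (by decide) (asymm (hv1.trans hv2))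

end PermLevel


/-! ### Counting -/

section Count

variable (n : ℕ)

noncomputable def statN (s : ℕ → Bool) : ℕ :=
  ((Finset.range (n-1)).filter fun i =>
    s i = true ∧ (s (i+1) = false ∨ (0 < i ∧ s (i-1) = false))).card

noncomputable def statM (t : ℕ → Bool) : ℕ :=
  ((Finset.range (n-1)).filter fun i =>
    t i = false ∧ (t (i+1) = true ∨ (0 < i ∧ t (i-1) = true))).card

lemma statM_neg (s : ℕ → Bool) : statM n (fun j => !(s j)) = statN n s := by
  unfold statM statN
  congr 1
  apply Finset.filter_congr
  intro i _
  simp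

def padA (s₀ : Fin (n-1) → Bool) : ℕ → Bool :=
  fun j => if h : j < n - 1 then s₀ ⟨j, h⟩ else true

def padB (t₀ : Fin (n-1) → Bool) : ℕ → Bool :=
  fun j => if h : j < n - 1 then t₀ ⟨j, h⟩ else false

lemma padA_pad (s₀ : Fin (n-1) → Bool) : ∀ i, n - 1 ≤ i → padA n s₀ i = true := by
  intro i hi; unfold padA; rw [dif_neg (by omega)]

lemma padB_pad (t₀ : Fin (n-1) → Bool) : ∀ i, n - 1 ≤ i → padB n t₀ i = false := by
  intro i hi; unfold padB; rw [dif_neg (by omega)]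

lemma padB_neg (s₀ : Fin (n-1) → Bool) :
    padB n (fun i => !(s₀ i)) = fun j => !(padA n s₀ j) := by
  funext j
  unfold padA padB
  by_cases h : j < n - 1 <;> simp [h]

lemma padA_neg (t₀ : Fin (n-1) → Bool) :
    padB n t₀ = fun j => !(padA n (fun i => !(t₀ i)) j) := by
  funext j
  unfold padA padB
  by_cases h : j < n - 1 <;> simp [h]

/-- the permutation of class A associated to a padded string. -/
noncomputable def PhiA (s : ℕ → Bool) (hs : ∀ i, n - 1 ≤ i → s i = true) :
    Equiv.Perm (Fin n) :=
  Equiv.ofBijective (fun i => ⟨fA n s i.val, fA_lt n s hs i.isLt⟩)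
    (Finite.injective_iff_bijective.mp (by
      intro a b hab
      have hv : fA n s a.val = fA n s b.val := congrArg Fin.val hab
      rcases lt_trichotomy a.val b.val with hc | hc | hc
      · exact absurd hv (fA_inj n s hs hc b.isLt)
      · exact Fin.ext hc
      · exact absurd hv.symm (fA_inj n s hs hc a.isLt)))

lemma PhiA_val (s : ℕ → Bool) (hs : ∀ i, n - 1 ≤ i → s i = true) {i : ℕ} (h : i < n) :
    pN (PhiA n s hs) i = fA n s i := by
  rw [pN_val _ h]
  rfl

/-- the permutation of class B associated to a padded string. -/
noncomputable def PhiB (t : ℕ → Bool) (ht : ∀ i, n - 1 ≤ i → t i = false) :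
    Equiv.Perm (Fin n) :=
  Equiv.ofBijective (fun i => ⟨fB n t i.val, fB_lt n t ht i.isLt⟩)
    (Finite.injective_iff_bijective.mp (by
      intro a b hab
      have hv : fB n t a.val = fB n t b.val := congrArg Fin.val hab
      rcases lt_trichotomy a.val b.val with hc | hc | hc
      · exact absurd hv (fB_inj n t ht hc b.isLt)
      · exact Fin.ext hc
      · exact absurd hv.symm (fB_inj n t ht hc a.isLt)))

lemma PhiB_val (t : ℕ → Bool) (ht : ∀ i, n - 1 ≤ i → t i = false) {i : ℕ} (h : i < n) :
    pN (PhiB n t ht) i = fB n t i := by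
  rw [pN_val _ h]
  rfl

lemma PhiA_avoids (s : ℕ → Bool) (hs : ∀ i, n - 1 ≤ i → s i = true) :
    Avoids (PhiA n s hs) perm123 ∧ Avoids (PhiA n s hs) perm132 := by
  set π := PhiA n s hs with hπ
  have noTriple : ∀ i j l : Fin n, i < j → j < l → π i < π j → π i < π l → False := by
    intro i j l h1 h2 hv1 hv2
    have e1 : (π i : ℕ) = fA n s i.val := (pN_val π i.isLt).symm.trans (PhiA_val n s hs i.isLt)
    have e2 : (π j : ℕ) = fA n s j.val := (pN_val π j.isLt).symm.trans (PhiA_val n s hs j.isLt)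
    have e3 : (π l : ℕ) = fA n s l.val := (pN_val π l.isLt).symm.trans (PhiA_val n s hs l.isLt)
    have hw1 : fA n s i.val < fA n s j.val := by
      rw [← e1, ← e2]; exact hv1
    have hw2 : fA n s i.val < fA n s l.val := by
      rw [← e1, ← e3]; exact hv2
    obtain ⟨-, hj, -⟩ := (fA_lt_iff n s hs h1 j.isLt).mp hw1
    obtain ⟨-, -, hl⟩ := (fA_lt_iff n s hs (h1.trans h2) l.isLt).mp hw2
    have := jA_gt s (show j.val < l.val from h2) hj
    omega
  constructor
  · rintro ⟨f, hmono, hiff⟩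
    exact noTriple (f 0) (f 1) (f 2) (hmono (by decide)) (hmono (by decide))
      ((hiff 0 1).mp (by decide)) ((hiff 0 2).mp (by decide))
  · rintro ⟨f, hmono, hiff⟩
    exact noTriple (f 0) (f 1) (f 2) (hmono (by decide)) (hmono (by decide))
      ((hiff 0 1).mp (by decide)) ((hiff 0 2).mp (by decide))

lemma PhiB_avoids (t : ℕ → Bool) (ht : ∀ i, n - 1 ≤ i → t i = false) :
    Avoids (PhiB n t ht) perm132 ∧ Avoids (PhiB n t ht) perm213 := by
  set π := PhiB n t ht with hπ
  have eval : ∀ x : Fin n, (π x : ℕ) = fB n t x.val :=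
    fun x => (pN_val π x.isLt).symm.trans (PhiB_val n t ht x.isLt)
  constructor
  · rintro ⟨f, hmono, hiff⟩
    have h1 : f 0 < f 1 := hmono (by decide)
    have h2 : f 1 < f 2 := hmono (by decide)
    have hv1 : π (f 0) < π (f 2) := (hiff 0 2).mp (by decide)
    have hv2 : π (f 2) < π (f 1) := (hiff 2 1).mp (by decide)
    refine fB_no132 n t ht (show (f 0).val < (f 1).val from h1)
      (show (f 1).val < (f 2).val from h2) (f 2).isLt ?_ ?_
    · rw [← eval (f 0), ← eval (f 2)]; exact hv1
    · rw [← eval (f 2), ← eval (f 1)]; exact hv2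
  · rintro ⟨f, hmono, hiff⟩
    have h1 : f 0 < f 1 := hmono (by decide)
    have h2 : f 1 < f 2 := hmono (by decide)
    have hv1 : π (f 1) < π (f 0) := (hiff 1 0).mp (by decide)
    have hv2 : π (f 0) < π (f 2) := (hiff 0 2).mp (by decide)
    refine fB_no213 n t ht (show (f 0).val < (f 1).val from h1)
      (show (f 1).val < (f 2).val from h2) (f 2).isLt ?_ ?_
    · rw [← eval (f 1), ← eval (f 0)]; exact hv1
    · rw [← eval (f 0), ← eval (f 2)]; exact hv2

/-- computation of bdes via a ℕ-level criterion. -/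
lemma bdes_eq_filter (π : Equiv.Perm (Fin n)) (C : ℕ → Prop) [DecidablePred C]
    (hbig : ∀ i, i + 1 < n → (pN π (i+1) + 1 < pN π i ↔ C i)) :
    bdes π = ((Finset.range (n-1)).filter C).card := by
  unfold bdes
  congr 1
  ext x
  simp only [Finset.mem_filter, Finset.mem_range]
  constructor
  · rintro ⟨hx, hx1, hlt⟩
    refine ⟨by omega, ?_⟩
    rw [← hbig x hx1, pN_val π hx1, pN_val π (by omega)]
    exact hlt
  · rintro ⟨hx, hC⟩
    have hx1 : x + 1 < n := by omega
    refine ⟨by omega, hx1, ?_⟩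
    have := (hbig x hx1).mpr hC
    rwa [pN_val π hx1, pN_val π (by omega)] at this

lemma bdes_PhiA (s : ℕ → Bool) (hs : ∀ i, n - 1 ≤ i → s i = true) :
    bdes (PhiA n s hs) = statN n s := by
  unfold statN
  apply bdes_eq_filter
  intro i hi
  rw [PhiA_val n s hs (by omega), PhiA_val n s hs (by omega)]
  exact fA_big n s hs hi

lemma bdes_PhiB (t : ℕ → Bool) (ht : ∀ i, n - 1 ≤ i → t i = false) :
    bdes (PhiB n t ht) = statM n t := by
  unfold statM
  apply bdes_eq_filter
  intro i hi
  rw [PhiB_val n t ht (by omega), PhiB_val n t ht (by omega)]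
  exact fB_big n t ht hi

end Count


/-! ### The three cardinality identities -/

section Final

variable (n k : ℕ)

lemma fA_eq_recover {s s' : ℕ → Bool} {x : ℕ} (hx : x < n - 1)
    (he : fA n s x = fA n s' x) : s x = s' x := by
  rcases Bool.eq_false_or_eq_true (s x) with h1 | h1 <;>
    rcases Bool.eq_false_or_eq_true (s' x) with h2 | h2
  · rw [h1, h2]
  · exfalso
    rw [fA_of_false n s' h2] at he
    rw [(fA_recover n s hx).mp he] at h1
    simp at h1
  · exfalso
    rw [fA_of_false n s h1] at he
    rw [(fA_recover n s' hx).mp he.symm] at h2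
    simp at h2
  · rw [h1, h2]

lemma fB_eq_recover {t t' : ℕ → Bool} (ht : ∀ i, n - 1 ≤ i → t i = false)
    (ht' : ∀ i, n - 1 ≤ i → t' i = false) {x : ℕ} (hx : x + 1 < n)
    (h1 : fB n t x = fB n t' x) (h2 : fB n t (x+1) = fB n t' (x+1)) : t x = t' x := by
  have ha := fB_recover n t ht hx
  have hb := fB_recover n t' ht' hx
  rcases Bool.eq_false_or_eq_true (t x) with hc | hc <;>
    rcases Bool.eq_false_or_eq_true (t' x) with hd | hd
  · rw [hc, hd]
  · exfalso
    have := ha.mpr hc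
    rw [h1, h2] at this
    rw [hb.mp this] at hd
    simp at hd
  · exfalso
    have := hb.mpr hd
    rw [← h1, ← h2] at this
    rw [ha.mp this] at hc
    simp at hc
  · rw [hc, hd]

lemma cardA :
    Nat.card {π : Equiv.Perm (Fin n) // (Avoids π perm123 ∧ Avoids π perm132) ∧ bdes π = k} =
    Nat.card {s₀ : Fin (n-1) → Bool // statN n (padA n s₀) = k} := by
  symm
  apply Nat.card_eq_of_bijective
    (fun s₀ => ⟨PhiA n (padA n s₀.1) (padA_pad n s₀.1),
      PhiA_avoids n (padA n s₀.1) (padA_pad n s₀.1),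
      by rw [bdes_PhiA n (padA n s₀.1) (padA_pad n s₀.1)]; exact s₀.2⟩)
  constructor
  · intro a b he
    have hperm : PhiA n (padA n a.1) (padA_pad n a.1) =
        PhiA n (padA n b.1) (padA_pad n b.1) := congrArg Subtype.val he
    apply Subtype.ext
    funext i
    have hx : (i : ℕ) < n := by have := i.isLt; omega
    have h2 : pN (PhiA n (padA n a.1) (padA_pad n a.1)) i.val =
        pN (PhiA n (padA n b.1) (padA_pad n b.1)) i.val := by rw [hperm]
    rw [PhiA_val n _ _ hx, PhiA_val n _ _ hx] at h2
    have h3 := fA_eq_recover n i.isLt h2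
    unfold padA at h3
    rw [dif_pos i.isLt, dif_pos i.isLt] at h3
    exact h3
  · rintro ⟨π, ⟨hav1, hav2⟩, hbd⟩
    have htriple : ∀ i j l, i < j → j < l → l < n →
        pN π i < pN π j → pN π i < pN π l → False := by
      intro i j l h1 h2 h3 hv1 hv2
      have hi : i < n := by omega
      have hj : j < n := by omega
      rw [pN_val π hi, pN_val π hj] at hv1
      rw [pN_val π hi, pN_val π h3] at hv2
      have hIJ : (⟨i, hi⟩ : Fin n) < ⟨j, hj⟩ := Fin.mk_lt_mk.mpr h1
      have hJL : (⟨j, hj⟩ : Fin n) < ⟨l, h3⟩ := Fin.mk_lt_mk.mpr h2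
      rcases Nat.lt_trichotomy (π ⟨j, hj⟩ : ℕ) (π ⟨l, h3⟩ : ℕ) with hc | hc | hc
      · exact hav1 (contains123_of π hIJ hJL (Fin.lt_def.mpr hv1) (Fin.lt_def.mpr hc))
      · have : (⟨j, hj⟩ : Fin n) = ⟨l, h3⟩ := π.injective (Fin.ext hc)
        have := congrArg Fin.val this
        simp at this
        omega
      · exact hav2 (contains132_of π hIJ hJL (Fin.lt_def.mpr hv2) (Fin.lt_def.mpr hc))
    have hstruct := structA n (pN π) (fun i h => pN_lt π h)
      (fun i i' h h' he => pN_inj π h h' he) (fun v hv => pN_surj π hv) htriple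
    set s₀ : Fin (n-1) → Bool := fun i => sR n (pN π) i.val with hs₀
    have hpadeq : padA n s₀ = sR n (pN π) := by
      funext j
      unfold padA
      by_cases hj : j < n - 1
      · rw [dif_pos hj]
      · rw [dif_neg hj, (sR_pad n (pN π) j (by omega)).symm]
    have hPerm : PhiA n (padA n s₀) (padA_pad n s₀) = π := by
      apply Equiv.ext
      intro x
      apply Fin.ext
      show fA n (padA n s₀) x.val = (π x : ℕ)
      rw [hpadeq, ← hstruct x.val x.isLt, pN_val π x.isLt]
    refine ⟨⟨s₀, ?_⟩, ?_⟩
    · rw [← bdes_PhiA n (padA n s₀) (padA_pad n s₀), hPerm]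
      exact hbd
    · exact Subtype.ext hPerm

lemma cardB :
    Nat.card {π : Equiv.Perm (Fin n) // (Avoids π perm132 ∧ Avoids π perm213) ∧ bdes π = k} =
    Nat.card {t₀ : Fin (n-1) → Bool // statM n (padB n t₀) = k} := by
  symm
  apply Nat.card_eq_of_bijective
    (fun t₀ => ⟨PhiB n (padB n t₀.1) (padB_pad n t₀.1),
      PhiB_avoids n (padB n t₀.1) (padB_pad n t₀.1),
      by rw [bdes_PhiB n (padB n t₀.1) (padB_pad n t₀.1)]; exact t₀.2⟩)
  constructor
  · intro a b he
    have hperm : PhiB n (padB n a.1) (padB_pad n a.1) =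
        PhiB n (padB n b.1) (padB_pad n b.1) := congrArg Subtype.val he
    apply Subtype.ext
    funext i
    have hx : (i : ℕ) + 1 < n := by have := i.isLt; omega
    have hval : ∀ y, y < n → fB n (padB n a.1) y = fB n (padB n b.1) y := by
      intro y hy
      have h2 : pN (PhiB n (padB n a.1) (padB_pad n a.1)) y =
          pN (PhiB n (padB n b.1) (padB_pad n b.1)) y := by rw [hperm]
      rwa [PhiB_val n _ _ hy, PhiB_val n _ _ hy] at h2
    have h3 := fB_eq_recover n (padB_pad n a.1) (padB_pad n b.1) hx
      (hval i.val (by omega)) (hval (i.val + 1) hx)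
    unfold padB at h3
    rw [dif_pos i.isLt, dif_pos i.isLt] at h3
    exact h3
  · rintro ⟨π, ⟨hav1, hav2⟩, hbd⟩
    have hno132 : ∀ i j l, i < j → j < l → l < n →
        pN π i < pN π l → pN π l < pN π j → False := by
      intro i j l h1 h2 h3 hv1 hv2
      have hi : i < n := by omega
      have hj : j < n := by omega
      rw [pN_val π hi, pN_val π h3] at hv1
      rw [pN_val π h3, pN_val π hj] at hv2
      exact hav1 (contains132_of π (Fin.mk_lt_mk.mpr h1) (Fin.mk_lt_mk.mpr h2)
        (Fin.lt_def.mpr hv1) (Fin.lt_def.mpr hv2))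
    have hno213 : ∀ i j l, i < j → j < l → l < n →
        pN π j < pN π i → pN π i < pN π l → False := by
      intro i j l h1 h2 h3 hv1 hv2
      have hi : i < n := by omega
      have hj : j < n := by omega
      rw [pN_val π hj, pN_val π hi] at hv1
      rw [pN_val π hi, pN_val π h3] at hv2
      exact hav2 (contains213_of π (Fin.mk_lt_mk.mpr h1) (Fin.mk_lt_mk.mpr h2)
        (Fin.lt_def.mpr hv1) (Fin.lt_def.mpr hv2))
    have hstruct := structB n (pN π) (fun i h => pN_lt π h)
      (fun i i' h h' he => pN_inj π h h' he) (fun v hv => pN_surj π hv) hno132 hno213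
    set t₀ : Fin (n-1) → Bool := fun i => tR n (pN π) i.val with ht₀
    have hpadeq : padB n t₀ = tR n (pN π) := by
      funext j
      unfold padB
      by_cases hj : j < n - 1
      · rw [dif_pos hj]
      · rw [dif_neg hj, (tR_pad n (pN π) j (by omega)).symm]
    have hPerm : PhiB n (padB n t₀) (padB_pad n t₀) = π := by
      apply Equiv.ext
      intro x
      apply Fin.ext
      show fB n (padB n t₀) x.val = (π x : ℕ)
      rw [hpadeq, ← hstruct x.val x.isLt, pN_val π x.isLt]
    refine ⟨⟨t₀, ?_⟩, ?_⟩
    · rw [← bdes_PhiB n (padB n t₀) (padB_pad n t₀), hPerm]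
      exact hbd
    · exact Subtype.ext hPerm

lemma cardStr :
    Nat.card {s₀ : Fin (n-1) → Bool // statN n (padA n s₀) = k} =
    Nat.card {t₀ : Fin (n-1) → Bool // statM n (padB n t₀) = k} := by
  apply Nat.card_eq_of_bijective
    (fun s₀ => ⟨fun i => !(s₀.1 i), by
      rw [show (padB n fun i => !(s₀.1 i)) = fun j => !(padA n s₀.1 j) from padB_neg n s₀.1,
        statM_neg]
      exact s₀.2⟩)
  constructor
  · intro a b he
    apply Subtype.ext
    funext i
    have := congrFun (congrArg Subtype.val he) i
    simpa using this
  · rintro ⟨t₀, hstat⟩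
    refine ⟨⟨fun i => !(t₀ i), ?_⟩, ?_⟩
    · rw [← statM_neg n (padA n (fun i => !(t₀ i))), ← padA_neg n t₀]
      exact hstat
    · apply Subtype.ext
      funext i
      simp

end Final

end BDW

/-- The pattern sets `{123,132}` and `{132,213}` are bdes-Wilf equivalent. -/
theorem bdesWilf_123_132_eq_132_213 (n k : ℕ) :
    Nat.card {π : Equiv.Perm (Fin n) // (Avoids π perm123 ∧ Avoids π perm132) ∧ bdes π = k} =
    Nat.card {π : Equiv.Perm (Fin n) // (Avoids π perm132 ∧ Avoids π perm213) ∧ bdes π = k} :=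
  (BDW.cardA n k).trans ((BDW.cardStr n k).trans (BDW.cardB n k).symm)
end

section
/- Let B(t,x;{231,321}) = Σ_{n≥0} B_n(t;{231,321}) x^n be the formal power series in x, with coefficients in the polynomial ring ℤ[t], where B_n(t;{231,321}) = Σ_{π ∈ S_n({231,321})} t^{bdes(π)}. Then (1 − 2x + (1−t)x³) · B(t,x;{231,321}) = 1 − x as an identity of formal power series in (ℤ[t])[[x]]. -/
open scoped Classical

/-- The generating function `B(t,x;{231,321}) = Σ_n Σ_{π ∈ S_n({231,321})} t^{bdes π} x^n`,
as a formal power series in `x` with coefficients in `ℤ[t]`. -/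
noncomputable def B231321 : PowerSeries (Polynomial ℤ) :=
  PowerSeries.mk fun n =>
    ∑ π ∈ Finset.univ.filter
      (fun π : Equiv.Perm (Fin n) => Avoids π perm231 ∧ Avoids π perm321),
      Polynomial.X ^ bdes π


/-!
A permutation contains 231 or 321 exactly when some entry has two larger entries to its left.
Counting the entries left of `π k` shows that this never happens iff `k ≤ π k + 1` for all
positions `k` (0-indexed). Such a permutation with first entry `c` is `c, 0, 1, …, c - 1`
followed by a permutation of the same kind shifted up by `c + 1`, and its first block contributes
one big descent exactly when `c ≥ 2`. Hence `B = 1 + x W B` with `W = 1 + x + t x² / (1 - x)`,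
that is `(1 - x) W = 1 - (1 - t) x²`, and multiplying `B = 1 + x W B` by `1 - x` gives the
identity.
-/

open Finset
open Equiv (Perm ofBijective)

section Characterization

variable {n : ℕ}

def DropsAtMostOne (π : Perm (Fin n)) : Prop :=
  ∀ k : Fin n, (k : ℕ) ≤ π k + 1

def largerBefore (π : Perm (Fin n)) (k : Fin n) : Finset (Fin n) :=
  {p | p < k ∧ π k < π p}

lemma card_filter_apply_lt (π : Perm (Fin n)) (x : Fin n) :
    #({p | π p < x} : Finset (Fin n)) = x := by
  rw [← Fin.card_Iio x, ← card_map π.toEmbedding]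
  congr 1
  ext y
  simp only [mem_map, mem_filter, mem_univ, true_and, mem_Iio, Equiv.coe_toEmbedding]
  exact ⟨fun ⟨a, ha, hay⟩ => hay ▸ ha, fun h => ⟨π.symm y, by simpa, by simp⟩⟩

lemma le_apply_add_card_largerBefore (π : Perm (Fin n)) (k : Fin n) :
    (k : ℕ) ≤ π k + #(largerBefore π k) := by
  have hsub : Iio k ⊆ ({p | π p < π k} : Finset _) ∪ largerBefore π k := by
    intro p hp
    have hpk : p < k := mem_Iio.mp hp
    rcases (π.injective.ne hpk.ne).lt_or_gt with h | h <;> simp [largerBefore, hpk, h]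
  calc (k : ℕ) = #(Iio k) := (Fin.card_Iio k).symm
    _ ≤ #(({p | π p < π k} : Finset _) ∪ largerBefore π k) := card_le_card hsub
    _ ≤ π k + #(largerBefore π k) := by grw [card_union_le, card_filter_apply_lt]

lemma DropsAtMostOne.card_largerBefore_le_one {π : Perm (Fin n)} (hπ : DropsAtMostOne π)
    (k : Fin n) : #(largerBefore π k) ≤ 1 := by
  have hsub : ({p | π p < π k} : Finset _) ∪ largerBefore π k ⊆ Iic (π k) := by
    intro p hp
    simp only [largerBefore, mem_union, mem_filter, mem_univ, true_and] at hp
    have := hπ p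
    have := hπ k
    rw [mem_Iic, Fin.le_def]
    rcases hp with h | ⟨h, -⟩ <;> rw [Fin.lt_def] at h <;> omega
  have hdisj : Disjoint ({p | π p < π k} : Finset (Fin n)) (largerBefore π k) :=
    disjoint_filter.2 fun p _ h h' => lt_asymm h h'.2
  have := card_le_card hsub
  rw [card_union_of_disjoint hdisj, card_filter_apply_lt, Fin.card_Iic] at this
  omega

lemma one_lt_card_largerBefore_iff (π : Perm (Fin n)) (k : Fin n) :
    1 < #(largerBefore π k) ↔ ∃ i j, i < j ∧ j < k ∧ π k < π i ∧ π k < π j := by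
  simp only [one_lt_card_iff, largerBefore, mem_filter, mem_univ, true_and]
  constructor
  · rintro ⟨a, b, ⟨ha, ha'⟩, ⟨hb, hb'⟩, hab⟩
    rcases hab.lt_or_gt with h | h
    exacts [⟨a, b, h, hb, ha', hb'⟩, ⟨b, a, h, ha, hb', ha'⟩]
  · rintro ⟨i, j, hij, hjk, hi, hj⟩
    exact ⟨i, j, ⟨hij.trans hjk, hi⟩, ⟨hjk, hj⟩, hij.ne⟩

lemma contains_231_or_321_iff (π : Perm (Fin n)) :
    Contains π perm231 ∨ Contains π perm321 ↔
      ∃ i j k, i < j ∧ j < k ∧ π k < π i ∧ π k < π j := by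
  constructor
  · rintro (⟨f, hf, h⟩ | ⟨f, hf, h⟩) <;>
      exact ⟨f 0, f 1, f 2, hf (by decide), hf (by decide), (h 2 0).1 (by decide),
        (h 2 1).1 (by decide)⟩
  · rintro ⟨i, j, k, hij, hjk, hi, hj⟩
    have hf : StrictMono ![i, j, k] := by
      refine Fin.strictMono_iff_lt_succ.2 fun a => ?_
      fin_cases a
      exacts [hij, hjk]
    rcases (π.injective.ne hij.ne).lt_or_gt with h | h
    · refine .inl ⟨_, hf, fun a b => ?_⟩
      fin_cases a <;> fin_cases b <;> simp [perm231] <;> order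
    · refine .inr ⟨_, hf, fun a b => ?_⟩
      fin_cases a <;> fin_cases b <;> simp [perm321] <;> order

theorem avoids_231_321_iff (π : Perm (Fin n)) :
    Avoids π perm231 ∧ Avoids π perm321 ↔ DropsAtMostOne π := by
  rw [Avoids, Avoids, ← not_or, contains_231_or_321_iff]
  constructor
  · intro h k
    by_contra! hk
    have := le_apply_add_card_largerBefore π k
    obtain ⟨i, j, hijk⟩ := (one_lt_card_largerBefore_iff π k).1 (by omega)
    exact h ⟨i, j, k, hijk⟩
  · rintro hπ ⟨i, j, k, h⟩
    exact (hπ.card_largerBefore_le_one k).not_gt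
      ((one_lt_card_largerBefore_iff π k).2 ⟨i, j, h⟩)

end Characterization

section FirstBlock

variable {n c : ℕ} {π : Perm (Fin (n + 1))}

lemma DropsAtMostOne.apply_eq_sub_one (hπ : DropsAtMostOne π) (h0 : (π 0 : ℕ) = c)
    {k : Fin (n + 1)} (hk0 : 0 < (k : ℕ)) (hkc : (k : ℕ) ≤ c) : (π k : ℕ) = k - 1 := by
  induction k using WellFoundedLT.induction with
  | _ k ih =>
  obtain ⟨p, hp⟩ := π.surjective ⟨k - 1, by omega⟩
  replace hp : (π p : ℕ) = k - 1 := by rw [hp]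
  have hpk : (p : ℕ) ≤ k := by have := hπ p; omega
  have hp0 : 0 < (p : ℕ) := by
    by_contra! h
    rw [show p = 0 from Fin.ext (by simpa using h)] at hp
    omega
  have hkp : ¬ p < k := fun h => by
    rw [Fin.lt_def] at h
    have := ih p h hp0 (by omega)
    omega
  obtain rfl : p = k := Fin.ext (by rw [Fin.lt_def] at hkp; omega)
  exact hp

lemma DropsAtMostOne.lt_apply (hπ : DropsAtMostOne π) (h0 : (π 0 : ℕ) = c)
    {k : Fin (n + 1)} (hk : c < (k : ℕ)) : c < (π k : ℕ) := by
  by_contra! h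
  obtain ⟨j, hjc, hj⟩ : ∃ j : Fin (n + 1), (j : ℕ) ≤ c ∧ π j = π k := by
    rcases h.lt_or_eq with h | h
    · refine ⟨⟨π k + 1, by omega⟩, by simp only; omega, Fin.ext ?_⟩
      rw [hπ.apply_eq_sub_one h0 (by simp) (by simp only; omega)]
      simp
    · exact ⟨0, by simp, Fin.ext (by rw [h0, h])⟩
  obtain rfl := π.injective hj
  omega

end FirstBlock

section Blocks

variable {n c : ℕ}

noncomputable def prependBlock (hc : c ≤ n) (σ : Perm (Fin (n - c))) : Perm (Fin (n + 1)) :=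
  ofBijective (fun k =>
      if (k : ℕ) = 0 then ⟨c, by omega⟩
      else if h : (k : ℕ) ≤ c then ⟨k - 1, by omega⟩
      else ⟨σ ⟨k - (c + 1), by omega⟩ + (c + 1), by omega⟩) <|
    Function.Injective.bijective_of_finite fun a b hab => by
      refine Fin.ext ?_
      split_ifs at hab <;> simp only [Fin.mk.injEq] at hab <;> try omega
      have := Fin.mk.inj_iff.1 (σ.injective (Fin.ext (Nat.add_right_cancel hab)))
      omega

noncomputable def dropBlock (hc : c ≤ n) (π : Perm (Fin (n + 1)))
    (hπ : ∀ k : Fin (n + 1), c < (k : ℕ) → c < (π k : ℕ)) : Perm (Fin (n - c)) :=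
  ofBijective (fun x => ⟨π ⟨x + (c + 1), by omega⟩ - (c + 1), by have := x.isLt; omega⟩) <|
    Function.Injective.bijective_of_finite fun x y hxy => by
      have hx := hπ ⟨x + (c + 1), by omega⟩ (by simp only; omega)
      have hy := hπ ⟨y + (c + 1), by omega⟩ (by simp only; omega)
      have := Fin.mk.inj_iff.1
        (π.injective (Fin.ext ((tsub_left_inj hx hy).1 (Fin.mk.inj_iff.1 hxy))))
      exact Fin.ext (by omega)

variable (hc : c ≤ n) (σ : Perm (Fin (n - c)))

lemma prependBlock_apply_zero : (prependBlock hc σ 0 : ℕ) = c := by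
  simp [prependBlock]

lemma prependBlock_apply_of_le {k : Fin (n + 1)} (hk0 : 0 < (k : ℕ)) (hkc : (k : ℕ) ≤ c) :
    (prependBlock hc σ k : ℕ) = k - 1 := by
  simp [prependBlock, Fin.pos_iff_ne_zero.1 hk0, hkc]

lemma prependBlock_apply_add {k : Fin (n + 1)} {x : Fin (n - c)} (hk : (k : ℕ) = x + (c + 1)) :
    (prependBlock hc σ k : ℕ) = σ x + (c + 1) := by
  simp [prependBlock, Fin.pos_iff_ne_zero.1 (show 0 < (k : ℕ) by omega), hk,
    show ¬ (x : ℕ) + (c + 1) ≤ c by omega]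

lemma lt_prependBlock_apply {k : Fin (n + 1)} (hk : c < (k : ℕ)) :
    c < (prependBlock hc σ k : ℕ) := by
  rw [prependBlock_apply_add hc σ (x := ⟨k - (c + 1), by omega⟩) (by simp only; omega)]
  omega

lemma dropBlock_apply {π : Perm (Fin (n + 1))}
    (hπ : ∀ k : Fin (n + 1), c < (k : ℕ) → c < (π k : ℕ))
    {k : Fin (n + 1)} {x : Fin (n - c)} (hk : (k : ℕ) = x + (c + 1)) :
    (dropBlock hc π hπ x : ℕ) = π k - (c + 1) := by
  simp [dropBlock, ← hk]

lemma dropBlock_prependBlock :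
    dropBlock hc (prependBlock hc σ) (fun _ => lt_prependBlock_apply hc σ) = σ := by
  ext x
  rw [dropBlock_apply hc _ (k := ⟨x + (c + 1), by omega⟩) rfl,
    prependBlock_apply_add hc σ rfl, Nat.add_sub_cancel]

lemma DropsAtMostOne.prependBlock {σ : Perm (Fin (n - c))} (hσ : DropsAtMostOne σ) :
    DropsAtMostOne (prependBlock hc σ) := by
  intro k
  obtain h | h | h : (k : ℕ) = 0 ∨ (0 < (k : ℕ) ∧ (k : ℕ) ≤ c) ∨ c < k := by omega
  · omega
  · rw [prependBlock_apply_of_le hc σ h.1 h.2]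
    omega
  · have := hσ ⟨k - (c + 1), by omega⟩
    rw [prependBlock_apply_add hc σ (x := ⟨k - (c + 1), by omega⟩) (by simp only; omega)]
    simp only at this
    omega

variable {π : Perm (Fin (n + 1))}

lemma DropsAtMostOne.dropBlock (hπ : DropsAtMostOne π) (h0 : (π 0 : ℕ) = c) :
    DropsAtMostOne (dropBlock hc π fun _ => hπ.lt_apply h0) := by
  intro x
  have := hπ ⟨x + (c + 1), by omega⟩
  rw [dropBlock_apply hc _ (k := ⟨x + (c + 1), by omega⟩) rfl]
  simp only at this
  omega

lemma prependBlock_dropBlock (hπ : DropsAtMostOne π) (h0 : (π 0 : ℕ) = c) :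
    prependBlock hc (dropBlock hc π fun _ => hπ.lt_apply h0) = π := by
  ext k
  obtain h | h | h : (k : ℕ) = 0 ∨ (0 < (k : ℕ) ∧ (k : ℕ) ≤ c) ∨ c < k := by omega
  · rw [show k = 0 from Fin.ext h, prependBlock_apply_zero, h0]
  · rw [prependBlock_apply_of_le hc _ h.1 h.2, hπ.apply_eq_sub_one h0 h.1 h.2]
  · have := hπ.lt_apply h0 h
    rw [prependBlock_apply_add hc _ (x := ⟨k - (c + 1), by omega⟩) (by simp only; omega),
      dropBlock_apply hc _ (k := k) (by simp only; omega)]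
    omega

end Blocks

section BigDescents

variable {n c : ℕ}

def HasBigDescentAt (π : Perm (Fin n)) (k : ℕ) : Prop :=
  ∃ hk : k + 1 < n, (π ⟨k + 1, hk⟩ : ℕ) + 1 < π ⟨k, by omega⟩

lemma bdes_eq_sum (π : Perm (Fin n)) :
    bdes π = ∑ k ∈ range n, if HasBigDescentAt π k then 1 else 0 := by
  rw [bdes, card_filter]
  congr!

variable (hc : c ≤ n) (σ : Perm (Fin (n - c)))

lemma hasBigDescentAt_prependBlock_zero_iff :
    HasBigDescentAt (prependBlock hc σ) 0 ↔ 2 ≤ c := by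
  simp only [HasBigDescentAt, Fin.mk_zero', prependBlock_apply_zero]
  rcases Nat.eq_zero_or_pos c with rfl | hc0
  · simp
  · have := prependBlock_apply_of_le hc σ (k := ⟨1, by omega⟩) (by simp) (by simp only; omega)
    simp only at this
    rw [exists_prop_of_true (by omega), this]
    omega

lemma not_hasBigDescentAt_prependBlock_succ {k : ℕ} (hk : k < c) :
    ¬ HasBigDescentAt (prependBlock hc σ) (k + 1) := by
  rintro ⟨hk', hlt⟩
  rw [prependBlock_apply_of_le hc σ (k := ⟨k + 1, by omega⟩) (by simp) (by simp only; omega)]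
    at hlt
  by_cases hkc : k + 2 ≤ c
  · rw [prependBlock_apply_of_le hc σ (k := ⟨k + 1 + 1, hk'⟩) (by simp) (by simp only; omega)]
      at hlt
    simp only at hlt
    omega
  · have := lt_prependBlock_apply hc σ (k := ⟨k + 1 + 1, hk'⟩) (by simp only; omega)
    simp only at hlt
    omega

lemma hasBigDescentAt_prependBlock_add_iff {x : ℕ} (hx : x < n - c) :
    HasBigDescentAt (prependBlock hc σ) (c + 1 + x) ↔ HasBigDescentAt σ x := by
  have hval : ∀ y (hy : y < n - c) (hk : c + 1 + y < n + 1),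
      (prependBlock hc σ ⟨c + 1 + y, hk⟩ : ℕ) = σ ⟨y, hy⟩ + (c + 1) :=
    fun y hy hk => prependBlock_apply_add hc σ (by simp only; omega)
  have := hval x hx (by omega)
  constructor
  · rintro ⟨hk, hlt⟩
    have : (prependBlock hc σ ⟨c + 1 + x + 1, hk⟩ : ℕ) =
        σ ⟨x + 1, by omega⟩ + (c + 1) := hval (x + 1) _ hk
    exact ⟨by omega, by omega⟩
  · rintro ⟨hk, hlt⟩
    have : (prependBlock hc σ ⟨c + 1 + x + 1, by omega⟩ : ℕ) =
        σ ⟨x + 1, hk⟩ + (c + 1) := hval (x + 1) hk _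
    exact ⟨by omega, by omega⟩

lemma bdes_prependBlock : bdes (prependBlock hc σ) = bdes σ + if 2 ≤ c then 1 else 0 := by
  rw [bdes_eq_sum, bdes_eq_sum,
    show range (n + 1) = range (c + 1 + (n - c)) by congr 1; omega, sum_range_add,
    sum_range_succ',
    sum_eq_zero fun k hk => if_neg (not_hasBigDescentAt_prependBlock_succ hc σ (mem_range.1 hk)),
    if_congr (hasBigDescentAt_prependBlock_zero_iff hc σ) rfl rfl,
    sum_congr rfl fun x hx =>
      if_congr (hasBigDescentAt_prependBlock_add_iff hc σ (mem_range.1 hx)) rfl rfl]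
  ring

end BigDescents

section GeneratingFunction

open Polynomial in
noncomputable def avoiderPoly (n : ℕ) : ℤ[X] :=
  ∑ π ∈ ({π | DropsAtMostOne π} : Finset (Perm (Fin n))), X ^ bdes π

open Polynomial in
noncomputable def blockWeight (c : ℕ) : ℤ[X] :=
  if 2 ≤ c then X else 1

lemma avoiderPoly_zero : avoiderPoly 0 = 1 := by
  simp [avoiderPoly, DropsAtMostOne, bdes]

lemma sum_filter_apply_zero_eq_blockWeight_mul {n c : ℕ} (hc : c ≤ n) :
    ∑ π ∈ ({π | DropsAtMostOne π ∧ (π 0 : ℕ) = c} : Finset (Perm (Fin (n + 1)))),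
      Polynomial.X ^ bdes π = blockWeight c * avoiderPoly (n - c) := by
  rw [avoiderPoly, mul_sum]
  symm
  refine sum_bij' (fun σ _ => prependBlock hc σ)
    (fun π hπ => dropBlock hc π fun _ => (mem_filter.1 hπ).2.1.lt_apply (mem_filter.1 hπ).2.2)
    (fun σ hσ => ?_) (fun π hπ => ?_) (fun σ _ => dropBlock_prependBlock hc σ)
    (fun π hπ => prependBlock_dropBlock hc (mem_filter.1 hπ).2.1 (mem_filter.1 hπ).2.2)
    (fun σ _ => ?_)
  · simp only [mem_filter, mem_univ, true_and] at hσ ⊢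
    exact ⟨hσ.prependBlock hc, prependBlock_apply_zero hc σ⟩
  · simp only [mem_filter, mem_univ, true_and] at hπ ⊢
    exact hπ.1.dropBlock hc hπ.2
  · rw [bdes_prependBlock, pow_add, mul_comm, blockWeight]
    split_ifs <;> simp

lemma avoiderPoly_succ (n : ℕ) :
    avoiderPoly (n + 1) = ∑ p ∈ antidiagonal n, blockWeight p.1 * avoiderPoly p.2 := by
  rw [Nat.sum_antidiagonal_eq_sum_range_succ_mk, avoiderPoly,
    ← sum_fiberwise_of_maps_to (g := fun π : Perm (Fin (n + 1)) => (π 0 : ℕ))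
      (t := range (n + 1)) fun π _ => mem_range.2 (π 0).isLt]
  refine sum_congr rfl fun c hc => ?_
  rw [filter_filter,
    sum_filter_apply_zero_eq_blockWeight_mul (Nat.lt_succ_iff.1 (mem_range.1 hc))]

open PowerSeries

lemma coeff_B231321 (n : ℕ) : coeff n B231321 = avoiderPoly n := by
  simp [B231321, avoiderPoly, avoids_231_321_iff]

lemma B231321_eq_one_add : B231321 = 1 + X * PowerSeries.mk blockWeight * B231321 := by
  refine PowerSeries.ext fun n => ?_
  rcases n with _ | n
  · simp [coeff_B231321, avoiderPoly_zero]
  · rw [coeff_B231321, avoiderPoly_succ, map_add, mul_assoc, coeff_succ_X_mul, coeff_mul]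
    simp [coeff_B231321]

lemma one_sub_X_mul_mk_blockWeight :
    (1 - X) * PowerSeries.mk blockWeight = 1 + (C Polynomial.X - 1) * X ^ 2 := by
  refine PowerSeries.ext fun n => ?_
  rcases n with _ | _ | _ | n <;> simp [sub_mul, coeff_X_pow, blockWeight, coeff_succ_X_mul]

end GeneratingFunction

/-- `(1 − 2x + (1−t)x³) · B(t,x;{231,321}) = 1 − x`. -/
theorem genfun_avoids231_321 :
    letI X : PowerSeries (Polynomial ℤ) := PowerSeries.X
    letI T : PowerSeries (Polynomial ℤ) := PowerSeries.C (R := Polynomial ℤ) Polynomial.X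
    (1 - 2 * X + (1 - T) * X ^ 3) * B231321 = 1 - X := by
  linear_combination (1 - PowerSeries.X) * B231321_eq_one_add +
    PowerSeries.X * B231321 * one_sub_X_mul_mk_blockWeight
end
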